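/- arXiv:1901.04786 — 7 statements merged into one kernel-verified Lean document; each statement's English description precedes it below -/
import Mathlib

section
/- Let R ⊆ ℕ be a co-r-maximal set (i.e., R is r-cohesive and ℕ \ R is computably enumerable), and let f : ℕ → ℕ be a total computable function such that f(R) ∩ R is infinite. Then the restriction of f to R differs from the identity function only finitely: {n ∈ R : f(n) ≠ n} is finite. -/
/-- `X ⊆* Y`: `X` is contained in `Y` up to finitely many elements. -/
def AlmostSubset (X Y : Set ℕ) : Prop := (X \ Y).Finite

/-- `W ⊆ ℕ` is computably enumerable: it is the domain of a partial computable function. -/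
def CESet (W : Set ℕ) : Prop := ∃ f : ℕ →. ℕ, Partrec f ∧ W = f.Dom

/-- `W ⊆ ℕ` is computable (decidable). -/
def ComputableSet (W : Set ℕ) : Prop :=
  ∃ f : ℕ → Bool, Computable f ∧ ∀ n, n ∈ W ↔ f n = true

/-- `C ⊆ ℕ` is cohesive: `C` is infinite, and for every c.e. set `W`, either `W ∩ C`
or `Wᶜ ∩ C` is finite. -/
def Cohesive (C : Set ℕ) : Prop :=
  C.Infinite ∧ ∀ W : Set ℕ, CESet W → (W ∩ C).Finite ∨ (Wᶜ ∩ C).Finite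

/-- `C ⊆ ℕ` is r-cohesive. -/
def RCohesive (C : Set ℕ) : Prop :=
  C.Infinite ∧ ∀ W : Set ℕ, ComputableSet W → (W ∩ C).Finite ∨ (Wᶜ ∩ C).Finite

/-- `C` is co-maximal: its complement is maximal, i.e. `C` is cohesive with c.e. complement. -/
def CoMaximal (C : Set ℕ) : Prop := Cohesive C ∧ CESet Cᶜ

/-- A computable (decidable) binary relation on `ℕ`. -/
def ComputableRel (r : ℕ → ℕ → Prop) : Prop :=
  ∃ f : ℕ → ℕ → Bool, Computable₂ f ∧ ∀ m n, r m n ↔ f m n = true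

/-- `y` is the immediate successor of `x` with respect to the strict order `r`. -/
def ImmSucc {α : Type*} (r : α → α → Prop) (x y : α) : Prop :=
  r x y ∧ ∀ z, ¬(r x z ∧ r z y)

/-- A strict order on `ℕ` has order type ω when it is isomorphic to `(ℕ, <)`. -/
def OrderTypeOmega (r : ℕ → ℕ → Prop) : Prop :=
  Nonempty (r ≃r ((· < ·) : ℕ → ℕ → Prop))

/-- Carrier of the cohesive power: partial computable functions whose domain
almost contains `C`. -/
def CohCarrier (C : Set ℕ) : Type :=
  {φ : ℕ →. ℕ // Partrec φ ∧ (C \ φ.Dom).Finite}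

/-- Two partial functions agree (are defined and equal) on almost all of `C`. -/
def eqAE (C : Set ℕ) (φ ψ : ℕ →. ℕ) : Prop :=
  (C \ {n | ∃ a, a ∈ φ n ∧ a ∈ ψ n}).Finite

/-- The equivalence relation underlying the cohesive power. -/
def cohSetoid (C : Set ℕ) : Setoid (CohCarrier C) where
  r φ ψ := eqAE C φ.1 ψ.1
  iseqv := by
    constructor
    · intro φ
      refine φ.2.2.subset fun n hn => ⟨hn.1, fun hd => hn.2 ?_⟩
      obtain ⟨a, ha⟩ := (PFun.mem_dom _ _).mp hd
      exact ⟨a, ha, ha⟩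
    · intro φ ψ h
      exact h.subset fun n hn => ⟨hn.1, fun ⟨a, h1, h2⟩ => hn.2 ⟨a, h2, h1⟩⟩
    · intro φ ψ χ h1 h2
      refine (h1.union h2).subset fun n hn => ?_
      by_cases hmem : ∃ a, a ∈ φ.1 n ∧ a ∈ ψ.1 n
      · obtain ⟨a, ha1, ha2⟩ := hmem
        refine Or.inr ⟨hn.1, fun ⟨b, hb1, hb2⟩ => hn.2 ⟨a, ha1, ?_⟩⟩
        rwa [Part.mem_unique ha2 hb1]
      · exact Or.inl ⟨hn.1, hmem⟩

/-- The domain of the cohesive power of a computable structure on `ℕ` over `C`. -/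
def CohPow (C : Set ℕ) : Type := Quotient (cohSetoid C)

/-- The class of a partial computable function in the cohesive power. -/
def CohPow.mk {C : Set ℕ} (φ : CohCarrier C) : CohPow C := Quotient.mk (cohSetoid C) φ

/-- `φ(n) ≺ ψ(n)` (both defined) for almost all `n ∈ C`. -/
def ltAE (C : Set ℕ) (r : ℕ → ℕ → Prop) (φ ψ : ℕ →. ℕ) : Prop :=
  (C \ {n | ∃ a b, a ∈ φ n ∧ b ∈ ψ n ∧ r a b}).Finite

/-- The order of the cohesive power of the computable linear order `(ℕ, r)` over `C`. -/
def CohPow.Lt (C : Set ℕ) (r : ℕ → ℕ → Prop) (x y : CohPow C) : Prop :=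
  ∃ φ ψ : CohCarrier C, x = CohPow.mk φ ∧ y = CohPow.mk ψ ∧ ltAE C r φ.1 ψ.1

/-- The sum `L₀ + L₁` of two linear orders on `ℕ`, coded on `ℕ` via the computable
pairing `⟨0, l⟩ ↦ 2l`, `⟨1, l⟩ ↦ 2l + 1`. -/
def sumRel (r₀ r₁ : ℕ → ℕ → Prop) (m n : ℕ) : Prop :=
  (m % 2 = 0 ∧ n % 2 = 1) ∨
  (m % 2 = 0 ∧ n % 2 = 0 ∧ r₀ (m / 2) (n / 2)) ∨
  (m % 2 = 1 ∧ n % 2 = 1 ∧ r₁ (m / 2) (n / 2))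

/-- The lexicographic product `L₀ ×ₗ L₁` (first coordinate dominant) of two linear
orders on `ℕ`, coded on `ℕ` via the computable pairing `Nat.pair`. -/
def lexRel (r₀ r₁ : ℕ → ℕ → Prop) (m n : ℕ) : Prop :=
  r₀ m.unpair.1 n.unpair.1 ∨ (m.unpair.1 = n.unpair.1 ∧ r₁ m.unpair.2 n.unpair.2)

/-- The strict order of `ℕ + ℚ ×ₗ ℤ`. -/
def NQZlt : ℕ ⊕ ℚ × ℤ → ℕ ⊕ ℚ × ℤ → Prop :=
  Sum.Lex (· < ·) (Prod.Lex (· < ·) (· < ·))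

/-- The element of the cohesive power represented by the constant function `k`. -/
def constElt (C : Set ℕ) (k : ℕ) : CohPow C :=
  CohPow.mk ⟨fun _ => Part.some k, Partrec.const' (Part.some k), by
    have : (PFun.Dom fun _ : ℕ => Part.some k) = Set.univ := by
      ext n; simp [PFun.Dom]
    rw [this, Set.diff_univ]; exact Set.finite_empty⟩

/-- The element of the cohesive power represented by the identity function. -/
def idElt (C : Set ℕ) : CohPow C :=
  CohPow.mk ⟨fun n => Part.some n, Partrec.some, by
    have : (PFun.Dom fun n : ℕ => Part.some n) = Set.univ := by
      ext n; simp [PFun.Dom]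
    rw [this, Set.diff_univ]; exact Set.finite_empty⟩

/-!
By r-cohesiveness, the fixed points of `f` and the points with `f n < n` each form almost all or
almost none of `R`. So if `f` is not almost the identity on `R`, then `f` strictly decreases or
strictly increases on almost all of `R`. In both cases there is a computable set `X` with
`t ∈ X ↔ f t ∉ X` for almost all `t ∈ R` with `f t ∈ R`, whereas `X` is almost constant on `R`;
hence `f '' R ∩ R` is finite. When `f` decreases, `X` is the parity of the length of the
descending `f`-chain from `t`. When `f` increases, cut `ℕ` into computable blocks that `f` moves
at most one block up: almost always `t` and `f t` lie in the same block (the parity of the block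
index is almost constant on `R`), and `X` is the parity of the length of the increasing `f`-chain
within the block.
-/
theorem Computable.nat_iterate {α β : Type*} [Primcodable α] [Primcodable β] {f : α → ℕ}
    {g : α → β} {h : α → β → β} (hf : Computable f) (hg : Computable g) (hh : Computable₂ h) :
    Computable fun a => (h a)^[f a] (g a) :=
  (nat_rec hf hg (hh.comp fst (snd.comp snd)).to₂).of_eq
    fun a => by induction f a <;> simp [*, -Function.iterate_succ, Function.iterate_succ']

theorem computableSet_setOf {p : ℕ → Prop} [DecidablePred p]
    (hp : Computable fun n => decide (p n)) : ComputableSet {n | p n} :=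
  ⟨_, hp, fun n => by simp⟩

section Escape

variable {p : ℕ → Prop} [DecidablePred p] {g : ℕ → ℕ}

theorem exists_not_iterate_of_decreasing (μ : ℕ → ℕ) (hμ : ∀ a, p a → μ (g a) < μ a) (a : ℕ) :
    ∃ k, ¬p (g^[k] a) := by
  induction h : μ a using Nat.strong_induction_on generalizing a with
  | _ n ih =>
    by_cases ha : p a
    · obtain ⟨k, hk⟩ := ih (μ (g a)) (h ▸ hμ a ha) (g a) rfl
      exact ⟨k + 1, by rwa [Function.iterate_succ_apply]⟩
    · exact ⟨0, ha⟩

/-- The witness is the parity of the number of `g`-steps the orbit of `a` takes to leave `p`. -/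
theorem exists_computableSet_flip (hp : Computable fun a => decide (p a)) (hg : Computable g)
    (μ : ℕ → ℕ) (hμ : ∀ a, p a → μ (g a) < μ a) :
    ∃ X : Set ℕ, ComputableSet X ∧ ∀ a, p a → (a ∈ X ↔ g a ∉ X) := by
  have hex := exists_not_iterate_of_decreasing μ hμ
  have hleave : ComputablePred fun q : ℕ × ℕ => ¬p (g^[q.2] q.1) := by
    refine Computable.computablePred ?_
    simpa using (Primrec.not.to_comp.comp (hp.comp
      (Computable.nat_iterate Computable.snd Computable.fst (hg.comp Computable.snd).to₂)))
  refine ⟨{a | Nat.find (hex a) % 2 = 0}, computableSet_setOf ?_, fun a ha => ?_⟩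
  · exact Primrec.eq.decide.to_comp.comp
      (Primrec.nat_mod.to_comp.comp (Computable.find hleave hex) (Computable.const 2))
      (Computable.const 0)
  · have hsucc : Nat.find (hex a) = Nat.find (hex (g a)) + 1 :=
      Nat.find_comp_succ _ _ (by simpa using ha)
    change _ % 2 = 0 ↔ ¬_ % 2 = 0
    omega

end Escape

section Blocks

variable {f : ℕ → ℕ}

def prefixMax (f : ℕ → ℕ) : ℕ → ℕ
  | 0 => f 0
  | n + 1 => max (prefixMax f n) (f (n + 1))

theorem le_prefixMax {i n : ℕ} (h : i ≤ n) : f i ≤ prefixMax f n := by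
  induction n with
  | zero => rw [Nat.le_zero.mp h]; rfl
  | succ n ih =>
    obtain h | rfl := Nat.lt_succ_iff_lt_or_eq.mp (Nat.lt_succ_of_le h)
    · exact (ih (Nat.lt_succ_iff.mp h)).trans (le_max_left _ _)
    · exact le_max_right _ _

theorem Computable.prefixMax (hf : Computable f) : Computable (prefixMax f) :=
  (Computable.nat_rec Computable.id (hf.comp (Computable.const 0))
    (Primrec.nat_max.to_comp.comp (Computable.snd.comp Computable.snd)
      (hf.comp (Computable.succ.comp (Computable.fst.comp Computable.snd)))).to₂).of_eq
    fun n => by induction n <;> simp_all [_root_.prefixMax]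

theorem exists_blockBoundaries (hf : Computable f) :
    ∃ m : ℕ → ℕ, Computable m ∧ StrictMono m ∧ ∀ k n, n ≤ m k → f n < m (k + 1) := by
  set next : ℕ → ℕ := fun x => x + prefixMax f x + 1
  refine ⟨fun k => next^[k] 0, ?_, strictMono_nat_of_lt_succ fun k => ?_, fun k n hn => ?_⟩
  · exact Computable.nat_iterate Computable.id (Computable.const 0)
      (Computable.succ.comp (Primrec.nat_add.to_comp.comp Computable.snd
        (hf.prefixMax.comp Computable.snd))).to₂
  · simp only [Function.iterate_succ_apply', next]
    omega
  · have := le_prefixMax (f := f) (show n ≤ next^[k] 0 from hn)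
    simp only [Function.iterate_succ_apply', next] at this ⊢
    omega

theorem exists_blockIndex (hf : Computable f) :
    ∃ β : ℕ → ℕ, Computable β ∧ Monotone β ∧ (∀ n, β (f n) ≤ β n + 1) ∧
      ∀ k, ∃ b, ∀ n, β n = k → n < b := by
  obtain ⟨m, hm, hmono, hclosed⟩ := exists_blockBoundaries hf
  have hex (n : ℕ) : ∃ k, n < m (k + 1) := ⟨n, hmono.le_apply.trans_lt (hmono (by omega))⟩
  have hpred : ComputablePred fun q : ℕ × ℕ => q.1 < m (q.2 + 1) :=
    Computable.computablePred (Primrec.nat_lt.decide.to_comp.comp Computable.fst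
      (hm.comp (Computable.succ.comp Computable.snd)))
  refine ⟨fun n => Nat.find (hex n), Computable.find hpred hex,
    fun a b hab => Nat.find_mono fun k hk => hab.trans_lt hk, fun n => ?_,
    fun k => ⟨m (k + 1), fun n hn => hn ▸ Nat.find_spec (hex n)⟩⟩
  exact Nat.find_le (hclosed _ _ (Nat.find_spec (hex n)).le)

end Blocks

namespace RCohesive

variable {R : Set ℕ} {f : ℕ → ℕ}

theorem exists_finite_forall_mem_iff (hR : RCohesive R) {X : Set ℕ} (hX : ComputableSet X) :
    ∃ E : Set ℕ, E.Finite ∧ ∀ a ∈ R \ E, ∀ b ∈ R \ E, (a ∈ X ↔ b ∈ X) := by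
  rcases hR.2 X hX with h | h
  · exact ⟨X ∩ R, h, fun a ha b hb =>
      iff_of_false (fun hx => ha.2 ⟨hx, ha.1⟩) (fun hx => hb.2 ⟨hx, hb.1⟩)⟩
  · exact ⟨Xᶜ ∩ R, h, fun a ha b hb =>
      iff_of_true (not_not.mp fun hx => ha.2 ⟨hx, ha.1⟩)
        (not_not.mp fun hx => hb.2 ⟨hx, hb.1⟩)⟩

theorem finite_image_inter_of_flip (hR : RCohesive R) {X : Set ℕ} (hX : ComputableSet X)
    {E : Set ℕ} (hE : E.Finite) (hflip : ∀ t ∈ R \ E, f t ∈ R \ E → (t ∈ X ↔ f t ∉ X)) :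
    (f '' R ∩ R).Finite := by
  obtain ⟨E', hE', hconst⟩ := hR.exists_finite_forall_mem_iff hX
  refine (((hE.union hE').image f).union (hE.union hE')).subset ?_
  rintro _ ⟨⟨t, htR, rfl⟩, hftR⟩
  by_contra hbad
  simp only [Set.mem_union, Set.mem_image, not_or, not_exists, not_and] at hbad
  obtain ⟨hbadt, hftE, hftE'⟩ := hbad
  have htE : t ∉ E := fun h => hbadt t (Or.inl h) rfl
  have htE' : t ∉ E' := fun h => hbadt t (Or.inr h) rfl
  have := hflip t ⟨htR, htE⟩ ⟨hftR, hftE⟩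
  have := hconst t ⟨htR, htE'⟩ (f t) ⟨hftR, hftE'⟩
  tauto

theorem finite_image_inter_of_apply_lt (hR : RCohesive R) (hf : Computable f)
    (hdecr : {n | n ∈ R ∧ n ≤ f n}.Finite) : (f '' R ∩ R).Finite := by
  obtain ⟨X, hX, hflip⟩ := exists_computableSet_flip (p := fun a => f a < a)
    (Primrec.nat_lt.decide.to_comp.comp hf Computable.id) hf id fun _ h => h
  exact hR.finite_image_inter_of_flip hX hdecr fun t ht _ =>
    hflip t (not_le.mp fun h => ht.2 ⟨ht.1, h⟩)

theorem finite_image_inter_of_lt_apply (hR : RCohesive R) (hf : Computable f)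
    (hincr : {n | n ∈ R ∧ f n ≤ n}.Finite) : (f '' R ∩ R).Finite := by
  obtain ⟨β, hβ, hβmono, hβstep, hβbdd⟩ := exists_blockIndex hf
  choose b hb using hβbdd
  obtain ⟨E, hE, hparity⟩ := hR.exists_finite_forall_mem_iff (X := {n | β n % 2 = 0})
    (computableSet_setOf (Primrec.eq.decide.to_comp.comp
      (Primrec.nat_mod.to_comp.comp hβ (Computable.const 2)) (Computable.const 0)))
  have hsame : Computable fun a => decide (a < f a ∧ β (f a) = β a) :=
    (Primrec.and.to_comp.comp
      (Primrec.nat_lt.decide.to_comp.comp Computable.id hf)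
      (Primrec.eq.decide.to_comp.comp (hβ.comp hf) hβ) |>.of_eq fun a => by simp)
  obtain ⟨X, hX, hflip⟩ := exists_computableSet_flip hsame hf (fun a => b (β a) - a)
    fun a ⟨hlt, heq⟩ => by
      have := hb _ (f a) heq
      simp only [heq]
      omega
  refine hR.finite_image_inter_of_flip hX (hincr.union hE) fun t ht hft => hflip t ?_
  have hlt : t < f t := not_le.mp fun h => ht.2 (Or.inl ⟨ht.1, h⟩)
  have hpar : β t % 2 = 0 ↔ β (f t) % 2 = 0 :=
    hparity t ⟨ht.1, fun h => ht.2 (Or.inr h)⟩ (f t) ⟨hft.1, fun h => hft.2 (Or.inr h)⟩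
  have := hβmono hlt.le
  have := hβstep t
  exact ⟨hlt, by omega⟩

end RCohesive

theorem computable_map_on_co_r_maximal_general (R : Set ℕ) (hR : RCohesive R)
    (f : ℕ → ℕ) (hf : Computable f)
    (hinf : (f '' R ∩ R).Infinite) :
    {n | n ∈ R ∧ f n ≠ n}.Finite := by
  have hfixc : ComputableSet {n | f n = n} := computableSet_setOf
    (Primrec.eq.decide.to_comp.comp hf Computable.id)
  have hltc : ComputableSet {n | f n < n} := computableSet_setOf
    (Primrec.nat_lt.decide.to_comp.comp hf Computable.id)
  obtain hfix | hmoved := hR.2 _ hfixc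
  · exfalso
    obtain hlt | hge := hR.2 _ hltc
    · refine hinf (hR.finite_image_inter_of_lt_apply hf ((hfix.union hlt).subset ?_))
      rintro n ⟨hn, hle⟩
      obtain h | h := hle.eq_or_lt
      exacts [Or.inl ⟨h, hn⟩, Or.inr ⟨h, hn⟩]
    · exact hinf (hR.finite_image_inter_of_apply_lt hf
        (hge.subset fun n hn => ⟨not_lt.mpr hn.2, hn.1⟩))
  · exact hmoved.subset fun n hn => ⟨hn.2, hn.1⟩

/-- Lerman: if `R` is co-r-maximal and `f` is a total computable function with
`f(R) ∩ R` infinite, then `f` restricted to `R` is almost the identity. -/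
theorem computable_map_on_co_r_maximal (R : Set ℕ) (hR : RCohesive R)
    (hce : CESet Rᶜ) (f : ℕ → ℕ) (hf : Computable f)
    (hinf : (f '' R ∩ R).Infinite) :
    {n | n ∈ R ∧ f n ≠ n}.Finite :=
  computable_map_on_co_r_maximal_general R hR f hf hinf
end

section
/- Let C ⊆ ℕ be infinite and co-infinite with computably enumerable complement. Then there is a computable linear order L = (ℕ, ≺) of order type ω (order-isomorphic to (ℕ, <)) such that for every partial computable function φ : ℕ →. ℕ, for all but finitely many n ∈ C, if φ(n) is defined then φ(n) is not the ≺-immediate successor of n. -/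
section OASoxConstruction

open Nat.Partrec (Code)
open Nat.Partrec.Code

set_option maxHeartbeats 1000000


open Nat.Partrec (Code)
open Nat.Partrec.Code

set_option maxHeartbeats 1000000
namespace OASox

/-- search predicate: `p` codes a pair `(x, s)` with `x > b` and `x` enumerated in `W` by stage `s`. -/
def found (cf : Code) (b p : ℕ) : Bool :=
  decide (b < p.unpair.1) && (evaln p.unpair.2 cf p.unpair.1).isSome

theorem found_primrec (cf : Code) : Primrec₂ (found cf) := by
  have h1 : Primrec fun (q : ℕ × ℕ) => decide (q.1 < q.2.unpair.1) :=
    (Primrec.nat_lt.comp Primrec.fst ((Primrec.fst.comp Primrec.unpair).comp Primrec.snd)).decide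
  have h0 : Primrec fun (p : ℕ) => evaln p.unpair.2 cf p.unpair.1 :=
    Primrec.comp primrec_evaln <| Primrec.pair
      (Primrec.pair (Primrec.snd.comp Primrec.unpair) (Primrec.const cf))
      (Primrec.fst.comp Primrec.unpair)
  have h2 : Primrec fun (q : ℕ × ℕ) => (evaln q.2.unpair.2 cf q.2.unpair.1).isSome :=
    (Primrec.option_isSome.comp h0).comp Primrec.snd
  have h3 := Primrec.cond h1 h2 (Primrec.const false)
  exact h3.of_eq fun q => by unfold found; cases decide (q.1 < (Nat.unpair q.2).1) <;> rfl

/-- the least witness pair above `b`, projected to its first coordinate. -/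
noncomputable def nextC (cf : Code) (b : ℕ) : ℕ :=
  letI : Decidable (∃ p, found cf b p = true) := Classical.propDecidable _
  if h : ∃ p, found cf b p = true then (Nat.find h).unpair.1 else 0

theorem nextC_eq {cf : Code} {b : ℕ} (h : ∃ p, found cf b p = true) :
    nextC cf b = (Nat.find h).unpair.1 := by
  rw [nextC]
  exact dif_pos h

variable {cf : Code}

theorem nextC_computable (H : ∀ b, ∃ p, found cf b p = true) :
    Computable (nextC cf) := by
  have h1 : Partrec₂ fun (b : ℕ) => ((found cf b : ℕ → Bool) : ℕ →. Bool) :=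
    (found_primrec cf).to_comp.partrec₂
  have h2 : Partrec fun (b : ℕ) => Nat.rfind ((found cf b : ℕ → Bool) : ℕ →. Bool) :=
    Partrec.rfind h1
  have h3 : Partrec fun (b : ℕ) =>
      (Nat.rfind ((found cf b : ℕ → Bool) : ℕ →. Bool)).map fun p => p.unpair.1 :=
    h2.map ((Primrec.fst.comp Primrec.unpair).comp Primrec.snd).to_comp.to₂
  apply h3.of_eq_tot
  intro b
  have hfind : Nat.find (H b) ∈ Nat.rfind ((found cf b : ℕ → Bool) : ℕ →. Bool) := by
    apply Nat.mem_rfind.2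
    constructor
    · simpa using Nat.find_spec (H b)
    · intro m hm
      simpa using Nat.find_min (H b) hm
  rw [nextC_eq (H b)]
  exact Part.mem_map _ hfind

theorem nextC_spec (H : ∀ b, ∃ p, found cf b p = true) (b : ℕ) :
    b < nextC cf b ∧ ∃ s, (evaln s cf (nextC cf b)).isSome = true := by
  rw [nextC_eq (H b)]
  have hq := Nat.find_spec (H b)
  generalize Nat.find (H b) = q at hq ⊢
  simp only [found, Bool.and_eq_true, decide_eq_true_eq] at hq
  exact ⟨hq.1, ⟨_, hq.2⟩⟩

theorem nextC_gt (H : ∀ b, ∃ p, found cf b p = true) (b : ℕ) : b < nextC cf b :=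
  (nextC_spec H b).1

theorem nextC_mem (H : ∀ b, ∃ p, found cf b p = true) (b : ℕ) :
    ∃ s, (evaln s cf (nextC cf b)).isSome = true :=
  (nextC_spec H b).2

/-- an increasing computable enumeration of a subset of the c.e. set. -/
noncomputable def gfun (cf : Code) (k : ℕ) : ℕ :=
  Nat.rec (nextC cf 0) (fun _ ih => nextC cf ih) k

theorem gfun_computable (H : ∀ b, ∃ p, found cf b p = true) :
    Computable (gfun cf) := by
  have : Computable fun k : ℕ =>
      Nat.rec (motive := fun _ => ℕ) (nextC cf 0)
        (fun y IH => (fun (_ : ℕ) (q : ℕ × ℕ) => nextC cf q.2) k (y, IH)) (id k) :=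
    Computable.nat_rec Computable.id (Computable.const (nextC cf 0))
      ((nextC_computable H).comp (Computable.snd.comp Computable.snd)).to₂
  exact this.of_eq fun k => rfl

theorem gfun_succ (k : ℕ) : gfun cf (k + 1) = nextC cf (gfun cf k) := rfl

theorem gfun_zero : gfun cf 0 = nextC cf 0 := rfl

attribute [irreducible] nextC gfun

theorem gfun_strictMono (H : ∀ b, ∃ p, found cf b p = true) : StrictMono (gfun cf) :=
  strictMono_nat_of_lt_succ fun k => by rw [gfun_succ]; exact nextC_gt H (gfun cf k)

theorem gfun_mem (H : ∀ b, ∃ p, found cf b p = true) (k : ℕ) :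
    ∃ s, (evaln s cf (gfun cf k)).isSome = true := by
  cases k with
  | zero => rw [gfun_zero]; exact nextC_mem H 0
  | succ k => rw [gfun_succ]; exact nextC_mem H (gfun cf k)

/-- decidable membership in the range of `gfun`. -/
noncomputable def Rb (cf : Code) (x : ℕ) : Bool :=
  Nat.rec (decide (gfun cf 0 = x)) (fun k ih => ih || decide (gfun cf (k + 1) = x)) x

theorem Rb_computable (H : ∀ b, ∃ p, found cf b p = true) : Computable (Rb cf) := by
  have hg : Computable fun x : ℕ => decide (gfun cf 0 = x) :=
    Primrec.eq.decide.to_comp.comp (Computable.const (gfun cf 0)) Computable.id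
  have hh : Computable₂ fun (x : ℕ) (q : ℕ × Bool) => q.2 || decide (gfun cf (q.1 + 1) = x) := by
    have h1 : Computable fun (p : ℕ × (ℕ × Bool)) => p.2.2 := Computable.snd.comp Computable.snd
    have h2 : Computable fun (p : ℕ × (ℕ × Bool)) => decide (gfun cf (p.2.1 + 1) = p.1) :=
      Primrec.eq.decide.to_comp.comp
        ((gfun_computable H).comp (Computable.succ.comp (Computable.fst.comp Computable.snd)))
        Computable.fst
    have hh' : Computable fun (p : ℕ × (ℕ × Bool)) => p.2.2 || decide (gfun cf (p.2.1 + 1) = p.1) :=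
      (Computable.cond h1 (Computable.const true) h2).of_eq
        (fun p => by rcases p with ⟨a, b, c⟩; cases c <;> rfl)
    exact hh'.to₂
  have : Computable fun x : ℕ =>
      Nat.rec (motive := fun _ => Bool) (decide (gfun cf 0 = x))
        (fun y IH => (fun (x : ℕ) (q : ℕ × Bool) => q.2 || decide (gfun cf (q.1 + 1) = x)) x (y, IH))
        (id x) :=
    Computable.nat_rec Computable.id hg hh
  exact this.of_eq fun x => rfl

theorem Rb_aux (x k : ℕ) :
    (Nat.rec (motive := fun _ => Bool) (decide (gfun cf 0 = x)) (fun k ih => ih || decide (gfun cf (k + 1) = x)) k = true)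
      ↔ ∃ j ≤ k, gfun cf j = x := by
  induction k with
  | zero => simp
  | succ k ih =>
      simp only [Bool.or_eq_true, decide_eq_true_eq, ih]
      constructor
      · rintro (⟨j, hj, rfl⟩ | rfl)
        · exact ⟨j, hj.trans (Nat.le_succ k), rfl⟩
        · exact ⟨k + 1, le_rfl, rfl⟩
      · rintro ⟨j, hj, rfl⟩
        rcases Nat.lt_or_ge j (k + 1) with h | h
        · exact Or.inl ⟨j, Nat.lt_succ_iff.1 h, rfl⟩
        · exact Or.inr (by rw [le_antisymm hj h])

theorem Rb_iff (H : ∀ b, ∃ p, found cf b p = true) (x : ℕ) :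
    Rb cf x = true ↔ ∃ j, gfun cf j = x := by
  rw [Rb, Rb_aux]
  constructor
  · rintro ⟨j, _, rfl⟩; exact ⟨j, rfl⟩
  · rintro ⟨j, rfl⟩
    exact ⟨j, (gfun_strictMono H).le_apply, rfl⟩











/-! ### auxiliary primitive recursive list functions -/

/-- count the pairs in `A` whose second component is `n`. -/
def cnt (A : List ℕ) (n : ℕ) : ℕ :=
  A.foldr (fun k acc => (if k.unpair.2 = n then 1 else 0) + acc) 0

theorem cnt_nil (n : ℕ) : cnt [] n = 0 := rfl

theorem cnt_cons (k : ℕ) (A : List ℕ) (n : ℕ) :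
    cnt (k :: A) A.length = 0 → True := fun _ => trivial

theorem cnt_cons' (k : ℕ) (A : List ℕ) (n : ℕ) :
    cnt (k :: A) n = (if k.unpair.2 = n then 1 else 0) + cnt A n := rfl

theorem cnt_primrec : Primrec₂ cnt := by
  have hk : Primrec fun (q : (List ℕ × ℕ) × ℕ × ℕ) => q.2.1 := Primrec.fst.comp Primrec.snd
  have hacc : Primrec fun (q : (List ℕ × ℕ) × ℕ × ℕ) => q.2.2 := Primrec.snd.comp Primrec.snd
  have hn : Primrec fun (q : (List ℕ × ℕ) × ℕ × ℕ) => q.1.2 := Primrec.snd.comp Primrec.fst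
  have h1 : Primrec fun (q : (List ℕ × ℕ) × ℕ × ℕ) =>
      (if q.2.1.unpair.2 = q.1.2 then 1 else 0 : ℕ) :=
    Primrec.ite (Primrec.eq.comp ((Primrec.snd.comp Primrec.unpair).comp hk) hn)
      (Primrec.const 1) (Primrec.const 0)
  have hstep : Primrec₂ fun (q : List ℕ × ℕ) (r : ℕ × ℕ) =>
      (if r.1.unpair.2 = q.2 then 1 else 0) + r.2 := (Primrec.nat_add.comp h1 hacc).to₂
  have : Primrec fun (p : List ℕ × ℕ) =>
      p.1.foldr (fun k acc => (if k.unpair.2 = p.2 then 1 else 0) + acc) 0 :=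
    (Primrec.list_foldr Primrec.fst (Primrec.const 0) hstep).of_eq (fun p => rfl)
  exact this.to₂

theorem cnt_eq_filter (A : List ℕ) (n : ℕ) :
    cnt A n = (A.filter (fun k => k.unpair.2 = n)).length := by
  induction A with
  | nil => rfl
  | cons k A ih =>
      rw [cnt_cons', ih, List.filter_cons]
      by_cases h : k.unpair.2 = n <;> simp [h, Nat.add_comm]

/-- boolean list membership. -/
def memb (A : List ℕ) (x : ℕ) : Bool :=
  A.foldr (fun k acc => decide (k = x) || acc) false

theorem memb_iff {A : List ℕ} {x : ℕ} : memb A x = true ↔ x ∈ A := by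
  induction A with
  | nil => simp [memb]
  | cons k A ih =>
      simp only [memb, List.foldr_cons, Bool.or_eq_true, decide_eq_true_eq] at *
      rw [ih]
      constructor
      · rintro (rfl | h); · exact List.mem_cons_self
        · exact List.mem_cons_of_mem _ h
      · intro h
        rcases List.mem_cons.1 h with rfl | h
        · exact Or.inl rfl
        · exact Or.inr h

theorem memb_primrec : Primrec₂ memb := by
  have hk : Primrec fun (q : (List ℕ × ℕ) × ℕ × Bool) => q.2.1 := Primrec.fst.comp Primrec.snd
  have hacc : Primrec fun (q : (List ℕ × ℕ) × ℕ × Bool) => q.2.2 := Primrec.snd.comp Primrec.snd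
  have hx : Primrec fun (q : (List ℕ × ℕ) × ℕ × Bool) => q.1.2 := Primrec.snd.comp Primrec.fst
  have hstep : Primrec₂ fun (q : List ℕ × ℕ) (r : ℕ × Bool) => decide (r.1 = q.2) || r.2 :=
    (Primrec.or.comp (Primrec.eq.comp hk hx).decide hacc).to₂
  have : Primrec fun (p : List ℕ × ℕ) =>
      p.1.foldr (fun k acc => decide (k = p.2) || acc) false :=
    (Primrec.list_foldr Primrec.fst (Primrec.const false) hstep).of_eq (fun p => rfl)
  exact this.to₂

/-- `allLe T n m`: every entry of `T` above `T[n]` is at least `T[m]`. -/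
def allLe (T : List ℕ) (n m : ℕ) : Bool :=
  (List.range T.length).foldr
    (fun j acc => (decide (T.getD j 0 ≤ T.getD n 0) || decide (T.getD m 0 ≤ T.getD j 0)) && acc)
    true

theorem foldr_and_iff (p : ℕ → Bool) (l : List ℕ) :
    (l.foldr (fun j acc => p j && acc) true = true) ↔ ∀ j ∈ l, p j = true := by
  induction l with
  | nil => simp
  | cons a l ih => simp [ih]

theorem allLe_iff {T : List ℕ} {n m : ℕ} :
    allLe T n m = true ↔
      ∀ j < T.length, T.getD n 0 < T.getD j 0 → T.getD m 0 ≤ T.getD j 0 := by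
  rw [allLe, foldr_and_iff]
  constructor
  · intro h j hj hlt
    have := h j (List.mem_range.2 hj)
    simp only [Bool.or_eq_true, decide_eq_true_eq] at this
    rcases this with h' | h'
    · exact absurd hlt (not_lt.2 h')
    · exact h'
  · intro h j hj
    simp only [Bool.or_eq_true, decide_eq_true_eq]
    rcases le_or_gt (T.getD j 0) (T.getD n 0) with h' | h'
    · exact Or.inl h'
    · exact Or.inr (h j (List.mem_range.1 hj) h')

theorem allLe_primrec : Primrec fun (q : List ℕ × ℕ × ℕ) => allLe q.1 q.2.1 q.2.2 := by
  have hT : Primrec fun (q : (List ℕ × ℕ × ℕ) × ℕ × Bool) => q.1.1 := Primrec.fst.comp Primrec.fst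
  have hn : Primrec fun (q : (List ℕ × ℕ × ℕ) × ℕ × Bool) => q.1.2.1 :=
    (Primrec.fst.comp Primrec.snd).comp Primrec.fst
  have hm : Primrec fun (q : (List ℕ × ℕ × ℕ) × ℕ × Bool) => q.1.2.2 :=
    (Primrec.snd.comp Primrec.snd).comp Primrec.fst
  have hj : Primrec fun (q : (List ℕ × ℕ × ℕ) × ℕ × Bool) => q.2.1 := Primrec.fst.comp Primrec.snd
  have hacc : Primrec fun (q : (List ℕ × ℕ × ℕ) × ℕ × Bool) => q.2.2 := Primrec.snd.comp Primrec.snd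
  have getD : Primrec₂ fun (l : List ℕ) (i : ℕ) => l.getD i 0 := Primrec.list_getD 0
  have hstep : Primrec₂ fun (q : List ℕ × ℕ × ℕ) (r : ℕ × Bool) =>
      (decide (q.1.getD r.1 0 ≤ q.1.getD q.2.1 0) || decide (q.1.getD q.2.2 0 ≤ q.1.getD r.1 0)) && r.2 :=
    (Primrec.and.comp
      (Primrec.or.comp
        (Primrec.nat_le.comp (getD.comp hT hj) (getD.comp hT hn)).decide
        (Primrec.nat_le.comp (getD.comp hT hm) (getD.comp hT hj)).decide)
      hacc).to₂
  exact (Primrec.list_foldr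
    (Primrec.list_range.comp (Primrec.list_length.comp Primrec.fst)) (Primrec.const true)
    hstep).of_eq (fun q => rfl)

/-- `lab T n m`: `m` is a valid index whose tag is the least tag above `T[n]`. -/
def lab (T : List ℕ) (n m : ℕ) : Bool :=
  decide (m < T.length) && decide (T.getD n 0 < T.getD m 0) && allLe T n m

theorem lab_iff {T : List ℕ} {n m : ℕ} :
    lab T n m = true ↔
      m < T.length ∧ T.getD n 0 < T.getD m 0 ∧
        ∀ j < T.length, T.getD n 0 < T.getD j 0 → T.getD m 0 ≤ T.getD j 0 := by
  rw [lab]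
  simp only [Bool.and_eq_true, decide_eq_true_eq, allLe_iff]
  tauto

theorem lab_primrec : Primrec fun (q : List ℕ × ℕ × ℕ) => lab q.1 q.2.1 q.2.2 := by
  have hT : Primrec fun (q : List ℕ × ℕ × ℕ) => q.1 := Primrec.fst
  have hn : Primrec fun (q : List ℕ × ℕ × ℕ) => q.2.1 := Primrec.fst.comp Primrec.snd
  have hm : Primrec fun (q : List ℕ × ℕ × ℕ) => q.2.2 := Primrec.snd.comp Primrec.snd
  have getD : Primrec₂ fun (l : List ℕ) (i : ℕ) => l.getD i 0 := Primrec.list_getD 0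
  exact Primrec.and.comp
    (Primrec.and.comp
      (Primrec.nat_lt.comp hm (Primrec.list_length.comp hT)).decide
      (Primrec.nat_lt.comp (getD.comp hT hn) (getD.comp hT hm)).decide)
    allLe_primrec




/-! ### the eligibility predicate and the step function -/

theorem computable_band {α : Type*} [Primcodable α] {f g : α → Bool}
    (hf : Computable f) (hg : Computable g) : Computable fun a => f a && g a :=
  (Computable.cond hf hg (Computable.const false)).of_eq fun a => by cases h : f a <;> simp [h]

/-- the eligibility test for acting on the pair `k = ⟨e, n⟩` at stage `s`. -/
noncomputable def elig (cf : Code) (s : ℕ) (T A : List ℕ) (k : ℕ) : Bool :=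
  decide (k.unpair.1 ≤ k.unpair.2) && decide (k.unpair.2 < T.length) && !(Rb cf k.unpair.2)
    && !(memb A k) &&
    ((evaln s (Denumerable.ofNat Code k.unpair.1) k.unpair.2).map fun m =>
      lab T k.unpair.2 m).getD false

theorem elig_iff {cf : Code} {s : ℕ} {T A : List ℕ} {k : ℕ} :
    elig cf s T A k = true ↔
      k.unpair.1 ≤ k.unpair.2 ∧ k.unpair.2 < T.length ∧ Rb cf k.unpair.2 = false ∧ k ∉ A ∧
        ∃ m, evaln s (Denumerable.ofNat Code k.unpair.1) k.unpair.2 = some m ∧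
          m < T.length ∧ T.getD k.unpair.2 0 < T.getD m 0 ∧
          ∀ j < T.length, T.getD k.unpair.2 0 < T.getD j 0 → T.getD m 0 ≤ T.getD j 0 := by
  unfold elig
  cases hev : evaln s (Denumerable.ofNat Code k.unpair.1) k.unpair.2 with
  | none =>
      constructor
      · intro h; simp at h
      · rintro ⟨-, -, -, -, m, hm, -⟩
        cases hm
  | some m =>
      simp only [Option.map_some, Option.getD_some, Bool.and_eq_true, decide_eq_true_eq,
        Bool.not_eq_true', lab_iff]
      constructor
      · rintro ⟨⟨⟨⟨h1, h2⟩, h3⟩, h4⟩, h5, h6, h7⟩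
        exact ⟨h1, h2, h3, fun hmem => by simp [memb_iff.2 hmem] at h4,
          m, rfl, h5, h6, h7⟩
      · rintro ⟨h1, h2, h3, h4, m', hm', h5, h6, h7⟩
        obtain rfl : m' = m := (Option.some.inj hm').symm
        refine ⟨⟨⟨⟨h1, h2⟩, h3⟩, ?_⟩, h5, h6, h7⟩
        cases hmb : memb A k
        · rfl
        · exact absurd (memb_iff.1 hmb) h4

theorem elig_computable {cf : Code} (H : ∀ b, ∃ p, found cf b p = true) :
    Computable fun (q : ℕ × List ℕ × List ℕ × ℕ) => elig cf q.1 q.2.1 q.2.2.1 q.2.2.2 := by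
  have hs : Primrec fun (q : ℕ × List ℕ × List ℕ × ℕ) => q.1 := Primrec.fst
  have hT : Primrec fun (q : ℕ × List ℕ × List ℕ × ℕ) => q.2.1 := Primrec.fst.comp Primrec.snd
  have hA : Primrec fun (q : ℕ × List ℕ × List ℕ × ℕ) => q.2.2.1 :=
    (Primrec.fst.comp Primrec.snd).comp Primrec.snd
  have hk : Primrec fun (q : ℕ × List ℕ × List ℕ × ℕ) => q.2.2.2 :=
    (Primrec.snd.comp Primrec.snd).comp Primrec.snd
  have he : Primrec fun (q : ℕ × List ℕ × List ℕ × ℕ) => q.2.2.2.unpair.1 :=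
    Primrec.fst.comp (Primrec.unpair.comp hk)
  have hn : Primrec fun (q : ℕ × List ℕ × List ℕ × ℕ) => q.2.2.2.unpair.2 :=
    Primrec.snd.comp (Primrec.unpair.comp hk)
  have getD : Primrec₂ fun (l : List ℕ) (i : ℕ) => l.getD i 0 := Primrec.list_getD 0
  have hb1 : Primrec fun (q : ℕ × List ℕ × List ℕ × ℕ) =>
      (decide (q.2.2.2.unpair.1 ≤ q.2.2.2.unpair.2) &&
        decide (q.2.2.2.unpair.2 < q.2.1.length)) :=
    Primrec.and.comp (Primrec.nat_le.comp he hn).decide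
      (Primrec.nat_lt.comp hn (Primrec.list_length.comp hT)).decide
  have hb3 : Computable fun (q : ℕ × List ℕ × List ℕ × ℕ) => !(Rb cf q.2.2.2.unpair.2) :=
    Primrec.not.to_comp.comp ((Rb_computable H).comp hn.to_comp)
  have hb4 : Primrec fun (q : ℕ × List ℕ × List ℕ × ℕ) => !(memb q.2.2.1 q.2.2.2) :=
    Primrec.not.comp (memb_primrec.comp hA hk)
  have hev : Primrec fun (q : ℕ × List ℕ × List ℕ × ℕ) =>
      evaln q.1 (Denumerable.ofNat Code q.2.2.2.unpair.1) q.2.2.2.unpair.2 :=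
    Primrec.comp primrec_evaln
      (Primrec.pair (Primrec.pair hs (Primrec.comp (Primrec.ofNat Code) he)) hn)
  have hlabm : Primrec₂ fun (q : ℕ × List ℕ × List ℕ × ℕ) (m : ℕ) =>
      lab q.2.1 q.2.2.2.unpair.2 m :=
    (lab_primrec.comp (Primrec.pair (hT.comp Primrec.fst)
      (Primrec.pair (hn.comp Primrec.fst) Primrec.snd))).to₂
  have hb5 : Primrec fun (q : ℕ × List ℕ × List ℕ × ℕ) =>
      ((evaln q.1 (Denumerable.ofNat Code q.2.2.2.unpair.1) q.2.2.2.unpair.2).map fun m =>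
        lab q.2.1 q.2.2.2.unpair.2 m).getD false :=
    Primrec.option_getD.comp (Primrec.option_map hev hlabm) (Primrec.const false)
  exact computable_band (computable_band (computable_band hb1.to_comp hb3) hb4.to_comp) hb5.to_comp

attribute [irreducible] elig

/-- running count of elements of `R` up to `s`. -/
noncomputable def cR (cf : Code) (s : ℕ) : ℕ :=
  Nat.rec (cond (Rb cf 0) 1 0) (fun t ih => ih + cond (Rb cf (t + 1)) 1 0) s

theorem cR_zero {cf : Code} : cR cf 0 = cond (Rb cf 0) 1 0 := rfl

theorem cR_succ {cf : Code} (s : ℕ) : cR cf (s + 1) = cR cf s + cond (Rb cf (s + 1)) 1 0 := rfl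

theorem cR_computable {cf : Code} (H : ∀ b, ∃ p, found cf b p = true) :
    Computable (cR cf) := by
  have hstep : Computable₂ fun (_ : ℕ) (q : ℕ × ℕ) => q.2 + cond (Rb cf (q.1 + 1)) 1 0 := by
    have h1 : Computable fun (p : ℕ × (ℕ × ℕ)) => p.2.2 := Computable.snd.comp Computable.snd
    have h2 : Computable fun (p : ℕ × (ℕ × ℕ)) => cond (Rb cf (p.2.1 + 1)) 1 0 :=
      Computable.cond ((Rb_computable H).comp
        (Computable.succ.comp (Computable.fst.comp Computable.snd)))
        (Computable.const 1) (Computable.const 0)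
    exact (Primrec.nat_add.to_comp.comp h1 h2).to₂
  have : Computable fun s : ℕ =>
      Nat.rec (motive := fun _ => ℕ) (cond (Rb cf 0) 1 0)
        (fun y IH => (fun (_ : ℕ) (q : ℕ × ℕ) => q.2 + cond (Rb cf (q.1 + 1)) 1 0) s (y, IH))
        (id s) :=
    Computable.nat_rec Computable.id
      (Computable.cond (Computable.const (Rb cf 0)) (Computable.const 1) (Computable.const 0))
      hstep
  exact this.of_eq fun s => rfl

/-- the pair of indices scheduled at stage `s`. -/
noncomputable def stepIdx (cf : Code) (s : ℕ) : ℕ := (cR cf s - 1).unpair.1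

theorem stepIdx_computable {cf : Code} (H : ∀ b, ∃ p, found cf b p = true) :
    Computable (stepIdx cf) :=
  (Primrec.fst.comp Primrec.unpair).to_comp.comp
    (Primrec.nat_sub.to_comp.comp (cR_computable H) (Computable.const 1))

/-- the tag of an element inserted for the pair `⟨e, n⟩`. -/
def insTag (T A : List ℕ) (n : ℕ) : ℕ := T.getD n 0 + (n + 1) - cnt A n

/-- one step of the construction: at stage `s ≥ 1`, place element `s`. -/
noncomputable def step (cf : Code) (s : ℕ) (st : List ℕ × ℕ × List ℕ) : List ℕ × ℕ × List ℕ :=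
  cond (Rb cf s && elig cf s st.1 st.2.2 (stepIdx cf s))
    (st.1 ++ [insTag st.1 st.2.2 (stepIdx cf s).unpair.2], st.2.1, stepIdx cf s :: st.2.2)
    (st.1 ++ [st.2.1], st.2.1 + s + 2, st.2.2)


end OASox



open Nat.Partrec (Code)
open Nat.Partrec.Code

set_option maxHeartbeats 1000000

namespace OASox

theorem step_computable {cf : Code} (H : ∀ b, ∃ p, found cf b p = true) :
    Computable₂ (step cf) := by
  have hs : Computable fun (p : ℕ × (List ℕ × ℕ × List ℕ)) => p.1 := Computable.fst
  have hT : Computable fun (p : ℕ × (List ℕ × ℕ × List ℕ)) => p.2.1 :=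
    Computable.fst.comp Computable.snd
  have hfr : Computable fun (p : ℕ × (List ℕ × ℕ × List ℕ)) => p.2.2.1 :=
    (Computable.fst.comp Computable.snd).comp Computable.snd
  have hA : Computable fun (p : ℕ × (List ℕ × ℕ × List ℕ)) => p.2.2.2 :=
    (Computable.snd.comp Computable.snd).comp Computable.snd
  have hidx : Computable fun (p : ℕ × (List ℕ × ℕ × List ℕ)) => stepIdx cf p.1 :=
    (stepIdx_computable H).comp hs
  have hcondb : Computable fun (p : ℕ × (List ℕ × ℕ × List ℕ)) =>
      Rb cf p.1 && elig cf p.1 p.2.1 p.2.2.2 (stepIdx cf p.1) :=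
    computable_band ((Rb_computable H).comp hs)
      ((elig_computable H).comp (hs.pair (hT.pair (hA.pair hidx))))
  have hn : Computable fun (p : ℕ × (List ℕ × ℕ × List ℕ)) => (stepIdx cf p.1).unpair.2 :=
    (Primrec.snd.comp Primrec.unpair).to_comp.comp hidx
  have getD : Primrec₂ fun (l : List ℕ) (i : ℕ) => l.getD i 0 := Primrec.list_getD 0
  have hw : Computable fun (p : ℕ × (List ℕ × ℕ × List ℕ)) =>
      insTag p.2.1 p.2.2.2 (stepIdx cf p.1).unpair.2 := by
    unfold insTag
    exact Primrec.nat_sub.to_comp.comp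
      (Primrec.nat_add.to_comp.comp (getD.to_comp.comp hT hn)
        (Computable.succ.comp hn))
      (cnt_primrec.to_comp.comp hA hn)
  have hbr1 : Computable fun (p : ℕ × (List ℕ × ℕ × List ℕ)) =>
      ((p.2.1 ++ [insTag p.2.1 p.2.2.2 (stepIdx cf p.1).unpair.2], p.2.2.1,
        stepIdx cf p.1 :: p.2.2.2) : List ℕ × ℕ × List ℕ) :=
    (Computable.list_append.comp hT
        ((Computable.list_cons.comp hw (Computable.const [])))).pair
      (hfr.pair (Computable.list_cons.comp hidx hA))
  have hbr2 : Computable fun (p : ℕ × (List ℕ × ℕ × List ℕ)) =>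
      ((p.2.1 ++ [p.2.2.1], p.2.2.1 + p.1 + 2, p.2.2.2) : List ℕ × ℕ × List ℕ) :=
    (Computable.list_append.comp hT
        ((Computable.list_cons.comp hfr (Computable.const [])))).pair
      ((Primrec.nat_add.to_comp.comp
        (Primrec.nat_add.to_comp.comp hfr hs) (Computable.const 2)).pair hA)
  exact (Computable.cond hcondb hbr1 hbr2).to₂

theorem step_act' {cf : Code} {s : ℕ} {st : List ℕ × ℕ × List ℕ}
    (h : (Rb cf s && elig cf s st.1 st.2.2 (stepIdx cf s)) = true) :
    step cf s st = (st.1 ++ [insTag st.1 st.2.2 (stepIdx cf s).unpair.2], st.2.1,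
      stepIdx cf s :: st.2.2) := by
  unfold step; rw [h]; rfl

theorem step_top' {cf : Code} {s : ℕ} {st : List ℕ × ℕ × List ℕ}
    (h : (Rb cf s && elig cf s st.1 st.2.2 (stepIdx cf s)) = false) :
    step cf s st = (st.1 ++ [st.2.1], st.2.1 + s + 2, st.2.2) := by
  unfold step; rw [h]; rfl

theorem step_fst {cf : Code} (s : ℕ) (st : List ℕ × ℕ × List ℕ) :
    ∃ x, (step cf s st).1 = st.1 ++ [x] := by
  cases h : (Rb cf s && elig cf s st.1 st.2.2 (stepIdx cf s))
  · exact ⟨_, by rw [step_top' h]⟩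
  · exact ⟨_, by rw [step_act' h]⟩

/-- the state of the construction after stage `s`. -/
noncomputable def stAt (cf : Code) (s : ℕ) : List ℕ × ℕ × List ℕ :=
  Nat.rec ([0], 2, []) (fun t ih => step cf (t + 1) ih) s

theorem stAt_zero {cf : Code} : stAt cf 0 = ([0], 2, []) := rfl

theorem stAt_succ {cf : Code} (s : ℕ) : stAt cf (s + 1) = step cf (s + 1) (stAt cf s) := rfl

theorem stAt_computable {cf : Code} (H : ∀ b, ∃ p, found cf b p = true) :
    Computable (stAt cf) := by
  have hstep : Computable₂ fun (_ : ℕ) (q : ℕ × (List ℕ × ℕ × List ℕ)) =>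
      step cf (q.1 + 1) q.2 :=
    ((step_computable H).comp
      (Computable.succ.comp (Computable.fst.comp Computable.snd))
      (Computable.snd.comp Computable.snd)).to₂
  have : Computable fun s : ℕ =>
      Nat.rec (motive := fun _ => List ℕ × ℕ × List ℕ) ([0], 2, [])
        (fun y IH => (fun (_ : ℕ) (q : ℕ × (List ℕ × ℕ × List ℕ)) => step cf (q.1 + 1) q.2)
          s (y, IH)) (id s) :=
    Computable.nat_rec Computable.id (Computable.const ([0], 2, [])) hstep
  exact this.of_eq fun s => rfl

/-- the tag (priority value) of element `i`. -/
noncomputable def tg (cf : Code) (i : ℕ) : ℕ := (stAt cf i).1.getD i 0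

theorem tg_computable {cf : Code} (H : ∀ b, ∃ p, found cf b p = true) :
    Computable (tg cf) :=
  (Primrec.list_getD 0).to_comp.comp
    (Computable.fst.comp (stAt_computable H)) Computable.id

end OASox



open Nat.Partrec (Code)
open Nat.Partrec.Code

set_option maxHeartbeats 1000000

namespace OASox

variable {cf : Code}

theorem T_len (cf : Code) (s : ℕ) : (stAt cf s).1.length = s + 1 := by
  induction s with
  | zero => rfl
  | succ s ih =>
      obtain ⟨x, hx⟩ := step_fst (cf := cf) (s + 1) (stAt cf s)
      rw [stAt_succ, hx, List.length_append, ih]; rfl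

theorem T_succ (cf : Code) (s : ℕ) : ∃ x, (stAt cf (s + 1)).1 = (stAt cf s).1 ++ [x] := by
  rw [stAt_succ]; exact step_fst _ _

theorem getD_snoc (l : List ℕ) (x : ℕ) : (l ++ [x]).getD l.length 0 = x := by
  induction l with
  | nil => rfl
  | cons a l ih => simpa using ih

theorem tg_eq {i s : ℕ} (h : i ≤ s) : (stAt cf s).1.getD i 0 = tg cf i := by
  induction s with
  | zero => cases Nat.le_zero.1 h; rfl
  | succ s ih =>
      rcases Nat.lt_or_ge i (s + 1) with h' | h'
      · obtain ⟨x, hx⟩ := T_succ cf s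
        rw [hx, List.getD_append _ _ _ _ (by rw [T_len]; exact h')]
        exact ih (Nat.lt_succ_iff.1 h')
      · obtain rfl : i = s + 1 := le_antisymm h h'
        rfl

/-- `ActsAt cf t k`: at stage `t+1` the construction acts on the pair `k`. -/
def ActsAt (cf : Code) (t k : ℕ) : Prop :=
  Rb cf (t + 1) = true ∧ k = stepIdx cf (t + 1) ∧
    elig cf (t + 1) (stAt cf t).1 (stAt cf t).2.2 k = true

theorem ActsAt.bool {t k : ℕ} (h : ActsAt cf t k) :
    (Rb cf (t + 1) &&
      elig cf (t + 1) (stAt cf t).1 (stAt cf t).2.2 (stepIdx cf (t + 1))) = true := by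
  obtain ⟨h1, rfl, h3⟩ := h
  rw [h1, h3]; rfl

theorem stAt_succ_act {t k : ℕ} (h : ActsAt cf t k) :
    stAt cf (t + 1) = ((stAt cf t).1 ++ [insTag (stAt cf t).1 (stAt cf t).2.2 k.unpair.2],
      (stAt cf t).2.1, k :: (stAt cf t).2.2) := by
  have h2 := h.2.1
  rw [stAt_succ, step_act' h.bool, ← h2]

theorem stAt_succ_top {t : ℕ} (h : ¬ ActsAt cf t (stepIdx cf (t + 1))) :
    stAt cf (t + 1) = ((stAt cf t).1 ++ [(stAt cf t).2.1],
      (stAt cf t).2.1 + (t + 1) + 2, (stAt cf t).2.2) := by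
  rw [stAt_succ]
  apply step_top'
  cases h1 : Rb cf (t + 1)
  · rfl
  · cases h2 : elig cf (t + 1) (stAt cf t).1 (stAt cf t).2.2 (stepIdx cf (t + 1))
    · rfl
    · exact absurd ⟨h1, rfl, h2⟩ h

theorem acts_cases (cf : Code) (t : ℕ) :
    (∃ k, ActsAt cf t k) ∨ ¬ ActsAt cf t (stepIdx cf (t + 1)) := by
  by_cases h : ActsAt cf t (stepIdx cf (t + 1))
  · exact Or.inl ⟨_, h⟩
  · exact Or.inr h

theorem ActsAt.eq_stepIdx {t k : ℕ} (h : ActsAt cf t k) : k = stepIdx cf (t + 1) := h.2.1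

theorem mem_A_succ {t k : ℕ} :
    k ∈ (stAt cf (t + 1)).2.2 ↔ (k ∈ (stAt cf t).2.2 ∨ ActsAt cf t k) := by
  rcases acts_cases cf t with ⟨k', hk'⟩ | h
  · rw [stAt_succ_act hk']
    simp only [List.mem_cons]
    constructor
    · rintro (rfl | h)
      · exact Or.inr hk'
      · exact Or.inl h
    · rintro (h | h)
      · exact Or.inr h
      · obtain rfl : k = k' := h.eq_stepIdx.trans hk'.eq_stepIdx.symm
        exact Or.inl rfl
  · rw [stAt_succ_top h]
    constructor
    · exact Or.inl
    · rintro (hh | hh)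
      · exact hh
      · exact absurd (hh.eq_stepIdx ▸ hh) h

theorem mem_A_iff {s k : ℕ} : k ∈ (stAt cf s).2.2 ↔ ∃ t, t < s ∧ ActsAt cf t k := by
  induction s with
  | zero => simp [stAt_zero]
  | succ s ih =>
      rw [mem_A_succ, ih]
      constructor
      · rintro (⟨t, ht, hA⟩ | hA)
        · exact ⟨t, ht.trans (Nat.lt_succ_self s), hA⟩
        · exact ⟨s, Nat.lt_succ_self s, hA⟩
      · rintro ⟨t, ht, hA⟩
        rcases Nat.lt_or_ge t s with h' | h'
        · exact Or.inl ⟨t, h', hA⟩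
        · obtain rfl : t = s := le_antisymm (Nat.lt_succ_iff.1 ht) h'
          exact Or.inr hA

theorem fr_le_succ (cf : Code) (t : ℕ) : (stAt cf t).2.1 ≤ (stAt cf (t + 1)).2.1 := by
  rcases acts_cases cf t with ⟨k, hk⟩ | h
  · rw [stAt_succ_act hk]
  · rw [stAt_succ_top h]
    show (stAt cf t).2.1 ≤ (stAt cf t).2.1 + (t + 1) + 2
    omega

theorem fr_mono (cf : Code) {s t : ℕ} (h : s ≤ t) : (stAt cf s).2.1 ≤ (stAt cf t).2.1 := by
  induction t with
  | zero => cases Nat.le_zero.1 h; rfl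
  | succ t ih =>
      rcases Nat.lt_or_ge s (t + 1) with h' | h'
      · exact (ih (Nat.lt_succ_iff.1 h')).trans (fr_le_succ cf t)
      · obtain rfl : s = t + 1 := le_antisymm h h'
        rfl

/-- the data contained in an action. -/
theorem ActsAt.dest {t k : ℕ} (h : ActsAt cf t k) :
    k.unpair.1 ≤ k.unpair.2 ∧ k.unpair.2 ≤ t ∧ Rb cf k.unpair.2 = false ∧
      k ∉ (stAt cf t).2.2 ∧
      ∃ m, evaln (t + 1) (Denumerable.ofNat Code k.unpair.1) k.unpair.2 = some m ∧
        m ≤ t ∧ tg cf k.unpair.2 < tg cf m ∧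
        ∀ j ≤ t, tg cf k.unpair.2 < tg cf j → tg cf m ≤ tg cf j := by
  obtain ⟨h1, h2, h3⟩ := h
  rw [elig_iff] at h3
  obtain ⟨he, hn, hrb, hmem, m, hev, hm, hlt, hleast⟩ := h3
  rw [T_len] at hn hm
  have hn' : k.unpair.2 ≤ t := Nat.lt_succ_iff.1 hn
  have hm' : m ≤ t := Nat.lt_succ_iff.1 hm
  rw [tg_eq hn', tg_eq hm'] at hlt
  refine ⟨he, hn', hrb, hmem, m, hev, hm', hlt, ?_⟩
  intro j hj hlt'
  have := hleast j (by rw [T_len]; exact Nat.lt_succ_of_le hj)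
  rw [tg_eq hn', tg_eq hj, tg_eq hm'] at this
  exact this hlt'

theorem tg_succ_act {t k : ℕ} (h : ActsAt cf t k) :
    tg cf (t + 1) =
      tg cf k.unpair.2 + (k.unpair.2 + 1) - cnt (stAt cf t).2.2 k.unpair.2 := by
  have hn : k.unpair.2 ≤ t := h.dest.2.1
  have : tg cf (t + 1) = insTag (stAt cf t).1 (stAt cf t).2.2 k.unpair.2 := by
    rw [tg, stAt_succ_act h]
    have := getD_snoc (stAt cf t).1 (insTag (stAt cf t).1 (stAt cf t).2.2 k.unpair.2)
    rw [T_len] at this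
    exact this
  rw [this, insTag, tg_eq hn]

theorem tg_succ_top {t : ℕ} (h : ¬ ActsAt cf t (stepIdx cf (t + 1))) :
    tg cf (t + 1) = (stAt cf t).2.1 := by
  rw [tg, stAt_succ_top h]
  have := getD_snoc (stAt cf t).1 (stAt cf t).2.1
  rw [T_len] at this
  exact this

theorem cnt_succ_act {t k : ℕ} (h : ActsAt cf t k) (n : ℕ) :
    cnt (stAt cf (t + 1)).2.2 n =
      (if k.unpair.2 = n then 1 else 0) + cnt (stAt cf t).2.2 n := by
  rw [stAt_succ_act h, cnt_cons']

theorem cnt_succ_top {t : ℕ} (h : ¬ ActsAt cf t (stepIdx cf (t + 1))) (n : ℕ) :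
    cnt (stAt cf (t + 1)).2.2 n = cnt (stAt cf t).2.2 n := by
  rw [stAt_succ_top h]

end OASox



open Nat.Partrec (Code)
open Nat.Partrec.Code

set_option maxHeartbeats 1000000

namespace OASox

variable {cf : Code}

theorem cnt_le {A : List ℕ} {n e : ℕ} (hnd : A.Nodup)
    (h1 : ∀ k ∈ A, k.unpair.1 ≤ k.unpair.2) (he : e ≤ n) (hk : Nat.pair e n ∉ A) :
    cnt A n ≤ n := by
  rw [cnt_eq_filter]
  set L := A.filter (fun k => decide (k.unpair.2 = n)) with hL
  have hmemL : ∀ x ∈ L, x.unpair.2 = n ∧ x ∈ A := by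
    intro x hx
    rw [hL, List.mem_filter] at hx
    exact ⟨by simpa using hx.2, hx.1⟩
  have hLnd : L.Nodup := hnd.filter _
  have hinj : ∀ x ∈ L, ∀ y ∈ L, x.unpair.1 = y.unpair.1 → x = y := by
    intro x hx y hy hxy
    have hx2 := (hmemL x hx).1
    have hy2 := (hmemL y hy).1
    have : x.unpair = y.unpair := by
      ext
      · exact hxy
      · rw [hx2, hy2]
    calc x = Nat.pair x.unpair.1 x.unpair.2 := (Nat.pair_unpair x).symm
    _ = Nat.pair y.unpair.1 y.unpair.2 := by rw [this]
    _ = y := Nat.pair_unpair y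
  have hMnd : (L.map (fun x => x.unpair.1)).Nodup := hLnd.map_on hinj
  have hsub : (L.map (fun x => x.unpair.1)).toFinset ⊆ (Finset.range (n + 1)).erase e := by
    intro a ha
    rw [List.mem_toFinset, List.mem_map] at ha
    obtain ⟨x, hx, rfl⟩ := ha
    obtain ⟨hx2, hxA⟩ := hmemL x hx
    refine Finset.mem_erase.2 ⟨?_, Finset.mem_range.2 (Nat.lt_succ_of_le ?_)⟩
    · rintro rfl
      apply hk
      have : Nat.pair x.unpair.1 x.unpair.2 = x := Nat.pair_unpair x
      rw [hx2] at this
      rwa [this]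
    · have := h1 x hxA
      rw [hx2] at this
      exact this
  have hcard : (L.map (fun x => x.unpair.1)).toFinset.card = L.length := by
    rw [List.toFinset_card_of_nodup hMnd, List.length_map]
  calc L.length = (L.map (fun x => x.unpair.1)).toFinset.card := hcard.symm
  _ ≤ ((Finset.range (n + 1)).erase e).card := Finset.card_le_card hsub
  _ = n := by rw [Finset.card_erase_of_mem (Finset.mem_range.2 (Nat.lt_succ_of_le he)), Finset.card_range]; omega

theorem tg_zero : tg cf 0 = 0 := rfl

/-- the master invariant of the construction. -/
structure Inv (cf : Code) (s : ℕ) : Prop where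
  apair : ∀ k ∈ (stAt cf s).2.2,
    k.unpair.1 ≤ k.unpair.2 ∧ k.unpair.2 ≤ s ∧ Rb cf k.unpair.2 = false
  anodup : (stAt cf s).2.2.Nodup
  tagfr : ∀ i ≤ s, tg cf i < (stAt cf s).2.1
  zonefr : ∀ i ≤ s, Rb cf i = false → tg cf i + i + 1 < (stAt cf s).2.1
  zone : ∀ n ≤ s, Rb cf n = false → ∀ j ≤ s, tg cf n < tg cf j → tg cf j ≤ tg cf n + n + 1 →
    ∃ b, b < cnt (stAt cf s).2.2 n ∧ tg cf j = tg cf n + n + 1 - b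
  inj : ∀ i ≤ s, ∀ j ≤ s, tg cf i = tg cf j → i = j
  disj : ∀ n ≤ s, ∀ m ≤ s, n ≠ m → Rb cf n = false → Rb cf m = false →
    tg cf n + n + 1 < tg cf m ∨ tg cf m + m + 1 < tg cf n

theorem inv_zero (cf : Code) : Inv cf 0 := by
  have hA : (stAt cf 0).2.2 = [] := rfl
  have hfr : (stAt cf 0).2.1 = 2 := rfl
  refine ⟨?_, ?_, ?_, ?_, ?_, ?_, ?_⟩
  · intro k hk; rw [hA] at hk; cases hk
  · rw [hA]; exact List.nodup_nil
  · intro i hi; interval_cases i; rw [tg_zero, hfr]; omega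
  · intro i hi _; interval_cases i; rw [tg_zero, hfr]; omega
  · intro n hn _ j hj hlt hle
    interval_cases n; interval_cases j; omega
  · intro i hi j hj _; interval_cases i; interval_cases j; rfl
  · intro n hn m hm hne _ _; interval_cases n; interval_cases m; omega

/-- the amount by which an action for `⟨e, n⟩` is strictly inside the zone of `n`. -/
theorem act_tag_bounds {t k : ℕ} (hI : Inv cf t) (h : ActsAt cf t k) :
    tg cf k.unpair.2 < tg cf (t + 1) ∧
      tg cf (t + 1) ≤ tg cf k.unpair.2 + k.unpair.2 + 1 ∧
      tg cf (t + 1) = tg cf k.unpair.2 + k.unpair.2 + 1 - cnt (stAt cf t).2.2 k.unpair.2 := by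
  obtain ⟨he, hn, hrb, hmem, m, hev, hm, hlt, hleast⟩ := h.dest
  have hc : cnt (stAt cf t).2.2 k.unpair.2 ≤ k.unpair.2 := by
    apply cnt_le hI.anodup (fun k' hk' => (hI.apair k' hk').1) he
    rwa [Nat.pair_unpair]
  have hw := tg_succ_act h
  constructor
  · omega
  constructor
  · omega
  · omega

theorem inv_succ {t : ℕ} (hI : Inv cf t) : Inv cf (t + 1) := by
  rcases acts_cases cf t with ⟨k, hact⟩ | htop
  case inr =>
    -- top placement
    have htg : tg cf (t + 1) = (stAt cf t).2.1 := tg_succ_top htop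
    have hfr' : (stAt cf (t + 1)).2.1 = (stAt cf t).2.1 + (t + 1) + 2 := by
      rw [stAt_succ_top htop]
    have hA' : (stAt cf (t + 1)).2.2 = (stAt cf t).2.2 := by
      rw [stAt_succ_top htop]
    refine ⟨?_, ?_, ?_, ?_, ?_, ?_, ?_⟩
    · intro k hk
      rw [hA'] at hk
      obtain ⟨h1, h2, h3⟩ := hI.apair k hk
      exact ⟨h1, h2.trans (Nat.le_succ t), h3⟩
    · rw [hA']; exact hI.anodup
    · intro i hi
      rw [hfr']
      rcases Nat.lt_or_ge i (t + 1) with h' | h'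
      · have := hI.tagfr i (Nat.lt_succ_iff.1 h'); omega
      · obtain rfl : i = t + 1 := le_antisymm hi h'
        rw [htg]; omega
    · intro i hi hrb
      rw [hfr']
      rcases Nat.lt_or_ge i (t + 1) with h' | h'
      · have := hI.zonefr i (Nat.lt_succ_iff.1 h') hrb; omega
      · obtain rfl : i = t + 1 := le_antisymm hi h'
        rw [htg]; omega
    · intro n hn hrb j hj hlt hle
      rw [hA']
      rcases Nat.lt_or_ge n (t + 1) with hn' | hn'
      · have hn'' := Nat.lt_succ_iff.1 hn'
        rcases Nat.lt_or_ge j (t + 1) with hj' | hj'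
        · exact hI.zone n hn'' hrb j (Nat.lt_succ_iff.1 hj') hlt hle
        · obtain rfl : j = t + 1 := le_antisymm hj hj'
          have := hI.zonefr n hn'' hrb
          rw [htg] at hle
          omega
      · obtain rfl : n = t + 1 := le_antisymm hn hn'
        rcases Nat.lt_or_ge j (t + 1) with hj' | hj'
        · have := hI.tagfr j (Nat.lt_succ_iff.1 hj')
          rw [htg] at hlt
          omega
        · obtain rfl : j = t + 1 := le_antisymm hj hj'
          omega
    · intro i hi j hj heq
      rcases Nat.lt_or_ge i (t + 1) with hi' | hi' <;>
        rcases Nat.lt_or_ge j (t + 1) with hj' | hj'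
      · exact hI.inj i (Nat.lt_succ_iff.1 hi') j (Nat.lt_succ_iff.1 hj') heq
      · obtain rfl : j = t + 1 := le_antisymm hj hj'
        have := hI.tagfr i (Nat.lt_succ_iff.1 hi')
        rw [htg] at heq
        omega
      · obtain rfl : i = t + 1 := le_antisymm hi hi'
        have := hI.tagfr j (Nat.lt_succ_iff.1 hj')
        rw [htg] at heq
        omega
      · omega
    · intro n hn m hm hne hrbn hrbm
      rcases Nat.lt_or_ge n (t + 1) with hn' | hn' <;>
        rcases Nat.lt_or_ge m (t + 1) with hm' | hm'
      · exact hI.disj n (Nat.lt_succ_iff.1 hn') m (Nat.lt_succ_iff.1 hm') hne hrbn hrbm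
      · obtain rfl : m = t + 1 := le_antisymm hm hm'
        have := hI.zonefr n (Nat.lt_succ_iff.1 hn') hrbn
        rw [htg]
        omega
      · obtain rfl : n = t + 1 := le_antisymm hn hn'
        have := hI.zonefr m (Nat.lt_succ_iff.1 hm') hrbm
        rw [htg]
        omega
      · omega
  case inl =>
    -- action for the pair k
    obtain ⟨he, hn, hrbn, hmem, m, hev, hm, hltm, hleast⟩ := hact.dest
    obtain ⟨hw1, hw2, hw3⟩ := act_tag_bounds hI hact
    have hRb1 : Rb cf (t + 1) = true := hact.1
    have hfr' : (stAt cf (t + 1)).2.1 = (stAt cf t).2.1 := by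
      rw [stAt_succ_act hact]
    have hA' : (stAt cf (t + 1)).2.2 = k :: (stAt cf t).2.2 := by
      rw [stAt_succ_act hact]
    have hcnt' : ∀ n', cnt (stAt cf (t + 1)).2.2 n' =
        (if k.unpair.2 = n' then 1 else 0) + cnt (stAt cf t).2.2 n' := by
      intro n'; rw [hA', cnt_cons']
    -- the new tag is not an old tag
    have hnew : ∀ j ≤ t, tg cf j ≠ tg cf (t + 1) := by
      intro j hj hne
      have hj_gt : tg cf k.unpair.2 < tg cf j := by omega
      have hj_le : tg cf j ≤ tg cf k.unpair.2 + k.unpair.2 + 1 := by omega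
      obtain ⟨b, hb, hbe⟩ := hI.zone k.unpair.2 hn hrbn j hj hj_gt hj_le
      have hc : cnt (stAt cf t).2.2 k.unpair.2 ≤ k.unpair.2 := by
        apply cnt_le hI.anodup (fun k' hk' => (hI.apair k' hk').1) he
        rwa [Nat.pair_unpair]
      omega
    refine ⟨?_, ?_, ?_, ?_, ?_, ?_, ?_⟩
    · intro k' hk'
      rw [hA', List.mem_cons] at hk'
      rcases hk' with rfl | hk'
      · exact ⟨he, hn.trans (Nat.le_succ t), hrbn⟩
      · obtain ⟨h1, h2, h3⟩ := hI.apair k' hk'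
        exact ⟨h1, h2.trans (Nat.le_succ t), h3⟩
    · rw [hA']; exact List.Nodup.cons hmem hI.anodup
    · intro i hi
      rw [hfr']
      rcases Nat.lt_or_ge i (t + 1) with h' | h'
      · exact hI.tagfr i (Nat.lt_succ_iff.1 h')
      · obtain rfl : i = t + 1 := le_antisymm hi h'
        have := hI.zonefr k.unpair.2 hn hrbn
        omega
    · intro i hi hrb
      rw [hfr']
      rcases Nat.lt_or_ge i (t + 1) with h' | h'
      · exact hI.zonefr i (Nat.lt_succ_iff.1 h') hrb
      · obtain rfl : i = t + 1 := le_antisymm hi h'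
        rw [hRb1] at hrb; cases hrb
    · intro n' hn' hrb j hj hlt hle
      rcases Nat.lt_or_ge n' (t + 1) with hn'' | hn''
      · have hn3 := Nat.lt_succ_iff.1 hn''
        rcases Nat.lt_or_ge j (t + 1) with hj' | hj'
        · obtain ⟨b, hb, hbe⟩ := hI.zone n' hn3 hrb j (Nat.lt_succ_iff.1 hj') hlt hle
          refine ⟨b, ?_, hbe⟩
          rw [hcnt' n']
          split <;> omega
        · obtain rfl : j = t + 1 := le_antisymm hj hj'
          by_cases hkn : k.unpair.2 = n'
          · subst hkn
            refine ⟨cnt (stAt cf t).2.2 k.unpair.2, ?_, ?_⟩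
            · rw [hcnt' k.unpair.2]; simp
            · omega
          · -- j = t+1 lands in the zone of n' ≠ k.unpair.2 : contradiction with disjointness
            exfalso
            have hdisj := hI.disj n' hn3 k.unpair.2 hn (fun hh => hkn hh.symm) hrb hrbn
            omega
      · obtain rfl : n' = t + 1 := le_antisymm hn' hn''
        rw [hRb1] at hrb; cases hrb
    · intro i hi j hj heq
      rcases Nat.lt_or_ge i (t + 1) with hi' | hi' <;>
        rcases Nat.lt_or_ge j (t + 1) with hj' | hj'
      · exact hI.inj i (Nat.lt_succ_iff.1 hi') j (Nat.lt_succ_iff.1 hj') heq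
      · obtain rfl : j = t + 1 := le_antisymm hj hj'
        exact absurd heq (hnew i (Nat.lt_succ_iff.1 hi'))
      · obtain rfl : i = t + 1 := le_antisymm hi hi'
        exact absurd heq.symm (hnew j (Nat.lt_succ_iff.1 hj'))
      · omega
    · intro n' hn' m' hm' hne hrbn' hrbm'
      rcases Nat.lt_or_ge n' (t + 1) with hn'' | hn''
      · rcases Nat.lt_or_ge m' (t + 1) with hm'' | hm''
        · exact hI.disj n' (Nat.lt_succ_iff.1 hn'') m' (Nat.lt_succ_iff.1 hm'') hne hrbn' hrbm'
        · obtain rfl : m' = t + 1 := le_antisymm hm' hm''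
          rw [hRb1] at hrbm'; cases hrbm'
      · obtain rfl : n' = t + 1 := le_antisymm hn' hn''
        rw [hRb1] at hrbn'; cases hrbn'

theorem inv_all (cf : Code) (s : ℕ) : Inv cf s := by
  induction s with
  | zero => exact inv_zero cf
  | succ t ih => exact inv_succ ih

theorem tg_inj (cf : Code) : Function.Injective (tg cf) := by
  intro i j h
  exact (inv_all cf (max i j)).inj i (le_max_left i j) j (le_max_right i j) h

/-- an action inserts an element strictly between `n` and the current least element above. -/
theorem acts_between {t k : ℕ} (h : ActsAt cf t k) :
    ∃ m, evaln (t + 1) (Denumerable.ofNat Code k.unpair.1) k.unpair.2 = some m ∧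
      tg cf k.unpair.2 < tg cf (t + 1) ∧ tg cf (t + 1) < tg cf m := by
  have hI := inv_all cf t
  obtain ⟨he, hn, hrbn, hmem, m, hev, hm, hltm, hleast⟩ := h.dest
  obtain ⟨hw1, hw2, hw3⟩ := act_tag_bounds hI h
  refine ⟨m, hev, hw1, ?_⟩
  rcases Nat.lt_or_ge (tg cf k.unpair.2 + k.unpair.2 + 1) (tg cf m) with h' | h'
  · omega
  · obtain ⟨b, hb, hbe⟩ := hI.zone k.unpair.2 hn hrbn m hm hltm h'
    omega
end OASox



set_option maxHeartbeats 1000000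

namespace OASox

section OmegaIso

variable (t : ℕ → ℕ)

/-- successive values of the range of `t`, in increasing order. -/
noncomputable def tv : ℕ → ℕ
  | 0 => sInf (Set.range t)
  | k + 1 => sInf {y | y ∈ Set.range t ∧ tv k < y}

theorem range_infinite (hinj : Function.Injective t) : (Set.range t).Infinite := Set.infinite_range_of_injective hinj

theorem tv_mem (hinj : Function.Injective t) : ∀ k, tv t k ∈ Set.range t ∧ (∀ j, j < k → tv t j < tv t k) := by
  intro k
  induction k with
  | zero =>
      refine ⟨Nat.sInf_mem (Set.Infinite.nonempty (range_infinite t hinj)), by omega⟩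
  | succ k ih =>
      have hne : {y | y ∈ Set.range t ∧ tv t k < y}.Nonempty := by
        obtain ⟨m, hm, hlt⟩ := (range_infinite t hinj).exists_gt (tv t k)
        exact ⟨m, hm, hlt⟩
      have hmem := Nat.sInf_mem hne
      refine ⟨hmem.1, ?_⟩
      intro j hj
      rcases Nat.lt_or_ge j k with h' | h'
      · exact lt_trans ((ih.2) j h') hmem.2
      · obtain rfl : j = k := le_antisymm (Nat.lt_succ_iff.1 hj) h'
        exact hmem.2

theorem tv_strictMono (hinj : Function.Injective t) : StrictMono (tv t) := fun j k h => (tv_mem t hinj k).2 j h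

theorem tv_le_of_mem : ∀ {v}, v ∈ Set.range t → ∀ {k}, tv t k < v → tv t (k + 1) ≤ v := by
  intro v hv k hlt
  exact Nat.sInf_le ⟨hv, hlt⟩

theorem tv_surj (hinj : Function.Injective t) : ∀ v ∈ Set.range t, ∃ k, tv t k = v := by
  intro v hv
  by_contra hno
  push_neg at hno
  have hlt : ∀ k, tv t k < v := by
    intro k
    induction k with
    | zero =>
        have := Nat.sInf_le hv
        exact lt_of_le_of_ne this (hno 0)
    | succ k ih =>
        exact lt_of_le_of_ne (tv_le_of_mem t hv ih) (hno (k + 1))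
  have h1 : v + 1 ≤ tv t (v + 1) := (tv_strictMono t hinj).le_apply
  have := hlt (v + 1)
  omega

/-- the element with the `k`-th smallest tag. -/
noncomputable def xel (hinj : Function.Injective t) (k : ℕ) : ℕ := Classical.choose ((tv_mem t hinj k).1)

theorem xel_spec (hinj : Function.Injective t) (k : ℕ) : t (xel t hinj k) = tv t k :=
  Classical.choose_spec ((tv_mem t hinj k).1)

theorem xel_bijective (hinj : Function.Injective t) : Function.Bijective (xel t hinj) := by
  constructor
  · intro i j h
    have : tv t i = tv t j := by rw [← xel_spec t hinj i, ← xel_spec t hinj j, h]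
    exact (tv_strictMono t hinj).injective this
  · intro a
    obtain ⟨k, hk⟩ := tv_surj t hinj (t a) ⟨a, rfl⟩
    refine ⟨k, hinj ?_⟩
    rw [xel_spec t hinj k, hk]

theorem omega_iso (hinj : Function.Injective t) : Nonempty ((fun a b : ℕ => t a < t b) ≃r ((· < ·) : ℕ → ℕ → Prop)) := by
  refine ⟨RelIso.symm ⟨Equiv.ofBijective _ (xel_bijective t hinj), ?_⟩⟩
  intro a b
  show t (xel t hinj a) < t (xel t hinj b) ↔ a < b
  rw [xel_spec t hinj a, xel_spec t hinj b]
  exact (tv_strictMono t hinj).lt_iff_lt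

end OmegaIso

end OASox

open Nat.Partrec (Code)
open Nat.Partrec.Code

set_option maxHeartbeats 1000000
namespace OASox

variable {cf : Code}

theorem cR_eq_card (cf : Code) (s : ℕ) :
    cR cf s = ((Finset.range (s + 1)).filter (fun u => Rb cf u = true)).card := by
  induction s with
  | zero =>
      rw [cR_zero]
      cases h : Rb cf 0
      · simp [Finset.filter_singleton, h, Finset.range_one]
      · simp [Finset.filter_singleton, h, Finset.range_one]
  | succ s ih =>
      have hr : (Finset.range (s + 1 + 1)).filter (fun u => Rb cf u = true) =
          if Rb cf (s + 1) = true then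
            insert (s + 1) ((Finset.range (s + 1)).filter (fun u => Rb cf u = true))
          else (Finset.range (s + 1)).filter (fun u => Rb cf u = true) := by
        rw [Finset.range_add_one, Finset.filter_insert]
      rw [cR_succ, ih, hr]
      cases h : Rb cf (s + 1)
      · simp
      · rw [if_pos rfl, Finset.card_insert_of_notMem (by simp)]
        simp

theorem cR_at_g (H : ∀ b, ∃ p, found cf b p = true) (i : ℕ) :
    cR cf (gfun cf i) = i + 1 := by
  rw [cR_eq_card]
  have himg : (Finset.range (gfun cf i + 1)).filter (fun u => Rb cf u = true) =
      (Finset.range (i + 1)).image (gfun cf) := by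
    ext x
    simp only [Finset.mem_filter, Finset.mem_range, Finset.mem_image]
    constructor
    · rintro ⟨hx, hRb⟩
      obtain ⟨j, rfl⟩ := (Rb_iff H x).1 hRb
      refine ⟨j, ?_, rfl⟩
      have : j ≤ i := by
        by_contra hji
        push_neg at hji
        have := (gfun_strictMono H) hji
        omega
      omega
    · rintro ⟨j, hj, rfl⟩
      refine ⟨?_, (Rb_iff H _).2 ⟨j, rfl⟩⟩
      have : gfun cf j ≤ gfun cf i := (gfun_strictMono H).monotone (by omega)
      omega
  rw [himg, Finset.card_image_of_injective _ (gfun_strictMono H).injective,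
    Finset.card_range]

theorem main_aux (cf : Code) (H : ∀ b, ∃ p, found cf b p = true)
    {e n m : ℕ} (hen : e ≤ n) (hrbn : Rb cf n = false) {c : Code}
    (hc : Encodable.encode c = e)
    (hs₀ : ∃ s₀, evaln s₀ c n = some m)
    (himm1 : tg cf n < tg cf m)
    (himm2 : ∀ z, ¬(tg cf n < tg cf z ∧ tg cf z < tg cf m)) :
    False := by
  obtain ⟨s₀, hs₀⟩ := hs₀
  set k := Nat.pair e n with hk
  have hku1 : k.unpair.1 = e := by rw [hk, Nat.unpair_pair]
  have hku2 : k.unpair.2 = n := by rw [hk, Nat.unpair_pair]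
  have hofn : Denumerable.ofNat Code k.unpair.1 = c := by
    rw [hku1, ← hc, Denumerable.ofNat_encode]
  by_cases hacted : ∃ t, ActsAt cf t k
  · obtain ⟨t, ht⟩ := hacted
    obtain ⟨m', hev', hlt1, hlt2⟩ := acts_between ht
    rw [hofn] at hev'
    have hm' : m' ∈ eval c n := by
      rw [← hku2]
      exact evaln_sound (by rw [Option.mem_def]; exact hev')
    have hm'' : m ∈ eval c n := evaln_sound (by rw [Option.mem_def]; exact hs₀)
    obtain rfl : m' = m := Part.mem_unique hm' hm''
    rw [hku2] at hlt1
    exact himm2 (t + 1) ⟨hlt1, hlt2⟩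
  · push_neg at hacted
    set s₁ := gfun cf (Nat.pair k (s₀ + n + m + 1)) with hs₁
    have hgi : s₀ + n + m + 1 ≤ s₁ := by
      rw [hs₁]
      exact le_trans (Nat.right_le_pair _ _) (gfun_strictMono H).le_apply
    have hs₁pos : 1 ≤ s₁ := by omega
    set t := s₁ - 1 with hts
    have ht1 : t + 1 = s₁ := by omega
    have hTlen : (stAt cf t).1.length = s₁ := by rw [T_len, ht1]
    have hact : ActsAt cf t k := by
      refine ⟨?_, ?_, ?_⟩
      · rw [ht1, hs₁]
        exact (Rb_iff H _).2 ⟨_, rfl⟩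
      · rw [ht1, hs₁]
        unfold stepIdx
        rw [← hs₁]  -- stepIdx cf s₁
        rw [hs₁, cR_at_g H]
        simp [Nat.unpair_pair]
      · rw [elig_iff, hofn, hku1, hku2]
        have hnt : n ≤ t := by omega
        have hmt : m ≤ t := by omega
        refine ⟨hen, by rw [hTlen]; omega, hrbn, ?_, m, ?_, by rw [hTlen]; omega, ?_, ?_⟩
        · intro hmem
          obtain ⟨t', _, ht'⟩ := mem_A_iff.1 hmem
          exact hacted t' ht'
        · rw [ht1]
          have hs0s1 : s₀ ≤ s₁ := by omega
          have h5 := evaln_mono hs0s1 (show m ∈ evaln s₀ c n by rw [Option.mem_def]; exact hs₀)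
          rwa [Option.mem_def] at h5
        · rw [tg_eq hnt, tg_eq hmt]
          exact himm1
        · intro j hj hlt
          rw [hTlen] at hj
          rw [tg_eq hnt, tg_eq (by omega : j ≤ t)] at hlt
          rw [tg_eq hmt, tg_eq (by omega : j ≤ t)]
          by_contra hcon
          push_neg at hcon
          exact himm2 j ⟨hlt, hcon⟩
    exact hacted t hact

end OASox

end OASoxConstruction

open OASox
open Nat.Partrec (Code)
open Nat.Partrec.Code
set_option maxHeartbeats 1000000

/-- If `C` is infinite, co-infinite, and has c.e. complement, then there is a
computable linear order of type ω such that no partial computable function computes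
the immediate successor on almost all of `C`. -/
theorem exists_order_avoiding_partial_computable_successors (C : Set ℕ)
    (hinf : C.Infinite) (hcoinf : Cᶜ.Infinite) (hce : CESet Cᶜ) :
    ∃ r : ℕ → ℕ → Prop, ComputableRel r ∧ IsStrictTotalOrder ℕ r ∧ OrderTypeOmega r ∧
      ∀ φ : ℕ →. ℕ, Partrec φ →
        {n | n ∈ C ∧ ∃ m, m ∈ φ n ∧ ImmSucc r n m}.Finite := by
  classical
  obtain ⟨f, hf, hdom⟩ := hce
  obtain ⟨cf, hcf⟩ := exists_code.1 (Partrec.nat_iff.1 hf)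
  have hCc : ∀ x, x ∈ Cᶜ ↔ ∃ s, (evaln s cf x).isSome = true := by
    intro x
    have hx : x ∈ Cᶜ ↔ x ∈ f.Dom := by rw [hdom]
    rw [hx, PFun.mem_dom]
    constructor
    · rintro ⟨y, hy⟩
      rw [← hcf] at hy
      obtain ⟨s, hs⟩ := evaln_complete.1 hy
      exact ⟨s, by rw [Option.isSome_iff_exists]; exact ⟨y, hs⟩⟩
    · rintro ⟨s, hs⟩
      rw [Option.isSome_iff_exists] at hs
      obtain ⟨y, hy⟩ := hs
      refine ⟨y, ?_⟩
      rw [← hcf]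
      exact evaln_sound (by rw [Option.mem_def]; exact hy)
  have H : ∀ b, ∃ p, found cf b p = true := by
    intro b
    obtain ⟨x, hx, hbx⟩ := hcoinf.exists_gt b
    obtain ⟨s, hs⟩ := (hCc x).1 hx
    refine ⟨Nat.pair x s, ?_⟩
    unfold found
    rw [Nat.unpair_pair]
    simp [hbx, hs]
  have hRbC : ∀ n, n ∈ C → Rb cf n = false := by
    intro n hn
    cases hR : Rb cf n
    · rfl
    · exfalso
      obtain ⟨j, hj⟩ := (Rb_iff H n).1 hR
      exact ((hCc n).2 (hj ▸ gfun_mem H j)) hn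
  refine ⟨fun a b => tg cf a < tg cf b, ?_, ?_, ?_, ?_⟩
  · refine ⟨fun a b => decide (tg cf a < tg cf b), ?_, ?_⟩
    · exact (Primrec.nat_lt.decide.to_comp.comp ((tg_computable H).comp Computable.fst)
        ((tg_computable H).comp Computable.snd)).to₂
    · intro m n; simp
  · haveI h1 : IsTrichotomous ℕ (fun a b => tg cf a < tg cf b) := ⟨by
      intro a b
      rcases lt_trichotomy (tg cf a) (tg cf b) with h | h | h
      · exact fun h1 _ => absurd h h1
      · exact fun _ _ => tg_inj cf h
      · exact fun _ h2 => absurd h h2⟩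
    haveI h3 : IsIrrefl ℕ (fun a b => tg cf a < tg cf b) := ⟨fun a => Nat.lt_irrefl _⟩
    haveI h2 : IsTrans ℕ (fun a b => tg cf a < tg cf b) := ⟨fun a b c => Nat.lt_trans⟩
    haveI h4 : IsStrictOrder ℕ (fun a b => tg cf a < tg cf b) := {}
    exact {}
  · exact omega_iso (tg cf) (tg_inj cf)
  · intro φ hφ
    obtain ⟨c, hc⟩ := exists_code.1 (Partrec.nat_iff.1 hφ)
    apply Set.Finite.subset (Set.finite_Iio (Encodable.encode c))
    rintro n ⟨hnC, m, hmφ, himm1, himm2⟩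
    rw [Set.mem_Iio]
    by_contra hge
    push_neg at hge
    have hm_eval : m ∈ eval c n := by rw [hc]; exact hmφ
    obtain ⟨s₀, hs₀⟩ := evaln_complete.1 hm_eval
    rw [Option.mem_def] at hs₀
    exact main_aux cf H hge (hRbC n hnC) rfl ⟨s₀, hs₀⟩ himm1 himm2
end

section
/- Let C ⊆ ℕ be a co-maximal set and let φ : ℕ →. ℕ be a partial computable function with C ⊆* dom(φ). Then there is a total computable function f : ℕ → ℕ such that C ⊆* {n : φ(n)↓ and φ(n) = f(n)}. -/
/-! The domain of `φ` together with the c.e. set `Cᶜ ∪ (C \ dom φ)` covers `ℕ`, so dovetailing a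
computation of `φ(n)` with an enumeration of that set halts on every input and yields a total
computable `f`. Whenever `f(n)` does not come from `φ`, the point `n` lies in `Cᶜ` or in the finite
set `C \ dom φ`. -/

theorem REPred.ceSet {p : ℕ → Prop} (hp : REPred p) : CESet {n | p n} :=
  ⟨_, hp.map ((Computable.const 0).comp Computable.snd).to₂, by ext n; simp [Part.assert]⟩

theorem CESet.union {A B : Set ℕ} (hA : CESet A) (hB : CESet B) : CESet (A ∪ B) := by
  obtain ⟨f, hf, rfl⟩ := hA
  obtain ⟨g, hg, rfl⟩ := hB
  obtain ⟨k, hk, hkdom⟩ := Partrec.merge' hf hg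
  exact ⟨k, hk, by ext n; exact ((hkdom n).2).symm⟩

theorem Set.Finite.ceSet {F : Set ℕ} (hF : F.Finite) : CESet F := by
  obtain ⟨L, rfl⟩ := hF.exists_finset_coe
  have hmem : PrimrecPred fun n => ∃ a ∈ L.toList, a = n :=
    (PrimrecRel.exists_mem_list Primrec.eq).comp (Primrec.const L.toList) Primrec.id
  exact (hmem.computablePred.to_re.of_eq fun n => by simp).ceSet

theorem Partrec.exists_computable_mem_or_mem_of_dom_or_mem {φ : ℕ →. ℕ} (hφ : Partrec φ)
    {W : Set ℕ} (hW : CESet W) (hcover : ∀ n, (φ n).Dom ∨ n ∈ W) :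
    ∃ f : ℕ → ℕ, Computable f ∧ ∀ n, f n ∈ φ n ∨ n ∈ W := by
  obtain ⟨ψ, hψ, rfl⟩ := hW
  obtain ⟨k, hk, hkspec⟩ := Partrec.merge' hφ hψ
  have hkdom (n : ℕ) : (k n).Dom := (hkspec n).2.2 (hcover n)
  refine ⟨fun n => (k n).get (hkdom n), hk.of_eq_tot fun n => Part.get_mem _, fun n => ?_⟩
  exact ((hkspec n).1 _ (Part.get_mem _)).imp_right fun h => Part.dom_iff_mem.2 ⟨_, h⟩

/-- Over a co-maximal set, every partial computable function whose domain almost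
contains `C` agrees on almost all of `C` with a total computable function. -/
theorem partial_computable_eq_total_on_comaximal (C : Set ℕ) (hC : CoMaximal C)
    (φ : ℕ →. ℕ) (hφ : Partrec φ) (hdom : (C \ φ.Dom).Finite) :
    ∃ f : ℕ → ℕ, Computable f ∧ (C \ {n | f n ∈ φ n}).Finite := by
  have hcover (n : ℕ) : (φ n).Dom ∨ n ∈ Cᶜ ∪ (C \ φ.Dom) := by
    by_cases hn : n ∈ C
    · by_cases hd : n ∈ φ.Dom
      · exact Or.inl hd
      · exact Or.inr (Or.inr ⟨hn, hd⟩)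
    · exact Or.inr (Or.inl hn)
  obtain ⟨f, hf, hfφ⟩ :=
    hφ.exists_computable_mem_or_mem_of_dom_or_mem (hC.2.union hdom.ceSet) hcover
  refine ⟨f, hf, hdom.subset fun n ⟨hnC, hnf⟩ => ?_⟩
  rcases hfφ n with h | h | h
  · exact absurd h hnf
  · exact absurd hnC h
  · exact h
end

section
/- Let C ⊆ ℕ be a cohesive set and let L = (ℕ, ≺) be a computable linear order of order type ω (order-isomorphic to (ℕ, <)). Then the map sending each k ∈ ℕ to the equivalence class of the constant function with value k is an order embedding of L into the cohesive power Π_C L whose image is an initial segment of Π_C L; in particular, Π_C L has an initial segment of order type ω. -/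
/-!
A constant function `k` lies below another constant `l` in the cohesive power iff `k ≺ l`,
because `C` is infinite. If `[φ] < [k]`, then on almost all of `C` the value `φ(n)` lies in
the finite set of `≺`-predecessors of `k` (finite since `≺` has type ω). Each fibre
`{n | φ(n) = j}` is c.e., so by cohesiveness it contains either almost none or almost all of `C`;
they cannot all be almost disjoint from `C`, so `φ` is almost everywhere on `C` a constant `j`.
-/

lemma Set.Infinite.finite_diff_setOf_const_iff {C : Set ℕ} (hC : C.Infinite) (p : Prop) :
    (C \ {_n | p}).Finite ↔ p := by
  refine ⟨fun h => by_contra fun hp => hC ?_, fun hp => ?_⟩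
  · simpa [hp] using h
  · simp [hp]

lemma OrderTypeOmega.finite_setOf_rel {r : ℕ → ℕ → Prop} (h : OrderTypeOmega r) (k : ℕ) :
    {j | r j k}.Finite := by
  obtain ⟨e⟩ := h
  have : {j | r j k} = e ⁻¹' Set.Iio (e k) := by
    ext j
    simp [e.map_rel_iff]
  rw [this]
  exact (Set.finite_Iio (e k)).preimage e.injective.injOn

lemma Partrec.ceSet_setOf_mem {φ : ℕ →. ℕ} (hφ : Partrec φ) (j : ℕ) :
    CESet {n | j ∈ φ n} := by
  let test : ℕ → Option ℕ := fun a => if a = j then Option.some 0 else Option.none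
  have htest : Computable test :=
    (Primrec.ite (Primrec.eq.comp Primrec.id (Primrec.const j))
      (Primrec.const _) (Primrec.const _)).to_comp
  refine ⟨fun n => (φ n).bind fun a => (test a : Part ℕ),
    hφ.bind (Computable.ofOption (htest.comp Computable.snd)), ?_⟩
  ext n
  change j ∈ φ n ↔ ((φ n).bind fun a => (test a : Part ℕ)).Dom
  simp only [Part.dom_iff_mem, Part.mem_bind_iff, Part.mem_ofOption, test]
  constructor
  · intro hj
    exact ⟨0, j, hj, by simp⟩
  · rintro ⟨_, a, ha, hy⟩
    by_cases haj : a = j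
    · exact haj ▸ ha
    · simp [haj] at hy

lemma Cohesive.exists_finite_diff_setOf_mem {C : Set ℕ} (hC : Cohesive C) {φ : ℕ →. ℕ}
    (hφ : Partrec φ) {S : Set ℕ} (hS : S.Finite) (hφS : (C \ {n | ∃ a ∈ φ n, a ∈ S}).Finite) :
    ∃ j ∈ S, (C \ {n | j ∈ φ n}).Finite := by
  by_contra! hnot
  have hfibre : ∀ j ∈ S, ({n | j ∈ φ n} ∩ C).Finite := fun j hj =>
    (hC.2 _ (hφ.ceSet_setOf_mem j)).resolve_right fun h =>
      hnot j hj (by rwa [Set.sdiff_eq, Set.inter_comm])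
  refine hC.1 ((hφS.union (hS.biUnion hfibre)).subset fun n hn => ?_)
  by_cases hgood : ∃ a ∈ φ n, a ∈ S
  · obtain ⟨a, ha, haS⟩ := hgood
    exact Or.inr (Set.mem_biUnion haS ⟨ha, hn⟩)
  · exact Or.inl ⟨hn, hgood⟩

section CohesivePower

variable {C : Set ℕ} {r : ℕ → ℕ → Prop}

lemma CohPow.mk_surjective : Function.Surjective (CohPow.mk : CohCarrier C → CohPow C) :=
  Quotient.exists_rep

lemma CohPow.mk_eq_mk_iff {φ ψ : CohCarrier C} :
    CohPow.mk φ = CohPow.mk ψ ↔ eqAE C φ.1 ψ.1 :=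
  ⟨Quotient.exact, fun h => Quotient.sound h⟩

lemma ltAE.congr {φ φ' ψ ψ' : ℕ →. ℕ} (hφ : eqAE C φ φ') (hψ : eqAE C ψ ψ')
    (h : ltAE C r φ ψ) : ltAE C r φ' ψ' := by
  refine ((hφ.union hψ).union h).subset fun n ⟨hn, hnlt⟩ => ?_
  by_contra hout
  simp only [Set.mem_union, Set.mem_sdiff, hn, true_and, not_or, not_not] at hout
  obtain ⟨⟨⟨a, ha, ha'⟩, ⟨b, hb, hb'⟩⟩, ⟨a₀, b₀, ha₀, hb₀, hr⟩⟩ := hout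
  rw [Part.mem_unique ha₀ ha, Part.mem_unique hb₀ hb] at hr
  exact hnlt ⟨a, b, ha', hb', hr⟩

lemma CohPow.lt_mk_mk_iff {φ ψ : CohCarrier C} :
    CohPow.Lt C r (CohPow.mk φ) (CohPow.mk ψ) ↔ ltAE C r φ.1 ψ.1 := by
  refine ⟨fun ⟨φ', ψ', hφ, hψ, h⟩ => ?_, fun h => ⟨φ, ψ, rfl, rfl, h⟩⟩
  rw [CohPow.mk_eq_mk_iff] at hφ hψ
  exact h.congr ((cohSetoid C).iseqv.symm hφ) ((cohSetoid C).iseqv.symm hψ)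

lemma eqAE_const_right_iff {φ : ℕ →. ℕ} {j : ℕ} :
    eqAE C φ (fun _ => Part.some j) ↔ (C \ {n | j ∈ φ n}).Finite := by
  simp [eqAE]

lemma ltAE_const_right_iff {φ : ℕ →. ℕ} {k : ℕ} :
    ltAE C r φ (fun _ => Part.some k) ↔ (C \ {n | ∃ a ∈ φ n, r a k}).Finite := by
  simp [ltAE]

lemma constElt_lt_constElt_iff (hC : C.Infinite) {k l : ℕ} :
    CohPow.Lt C r (constElt C k) (constElt C l) ↔ r k l := by
  refine CohPow.lt_mk_mk_iff.trans (ltAE_const_right_iff.trans ?_)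
  simpa using hC.finite_diff_setOf_const_iff (r k l)

lemma constElt_injective (hC : C.Infinite) : Function.Injective (constElt C) := by
  intro k l hkl
  have hAE := CohPow.mk_eq_mk_iff.mp hkl
  have : (C \ {_n | k = l}).Finite := by simpa [eqAE] using hAE
  exact (hC.finite_diff_setOf_const_iff _).mp this

lemma Cohesive.exists_eq_constElt_of_lt_constElt (hC : Cohesive C)
    (hpred : ∀ k, {j | r j k}.Finite) {x : CohPow C} {k : ℕ}
    (hx : CohPow.Lt C r x (constElt C k)) : ∃ j, x = constElt C j := by
  obtain ⟨φ, rfl⟩ := CohPow.mk_surjective x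
  have hφk : (C \ {n | ∃ a ∈ φ.1 n, r a k}).Finite :=
    ltAE_const_right_iff.mp (CohPow.lt_mk_mk_iff.mp hx)
  obtain ⟨j, -, hj⟩ := hC.exists_finite_diff_setOf_mem φ.2.1 (hpred k) hφk
  exact ⟨j, CohPow.mk_eq_mk_iff.mpr (eqAE_const_right_iff.mpr hj)⟩

end CohesivePower

theorem constants_initial_segment_general (C : Set ℕ) (hC : Cohesive C)
    (r : ℕ → ℕ → Prop) (homega : OrderTypeOmega r) :
    (∀ k l : ℕ, r k l ↔ CohPow.Lt C r (constElt C k) (constElt C l)) ∧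
    Function.Injective (constElt C) ∧
    (∀ (x : CohPow C) (k : ℕ), CohPow.Lt C r x (constElt C k) → ∃ j : ℕ, x = constElt C j) := by
  refine ⟨fun k l => (constElt_lt_constElt_iff hC.1).symm, constElt_injective hC.1,
    fun x k hx => hC.exists_eq_constElt_of_lt_constElt homega.finite_setOf_rel hx⟩

/-- For a computable linear order of type ω, the constant functions give an order
embedding of the order into its cohesive power whose image is an initial segment;
in particular the cohesive power has an initial segment of type ω. -/
theorem constants_initial_segment (C : Set ℕ) (hC : Cohesive C)
    (r : ℕ → ℕ → Prop) (hcomp : ComputableRel r) (hsto : IsStrictTotalOrder ℕ r)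
    (homega : OrderTypeOmega r) :
    (∀ k l : ℕ, r k l ↔ CohPow.Lt C r (constElt C k) (constElt C l)) ∧
    Function.Injective (constElt C) ∧
    (∀ (x : CohPow C) (k : ℕ), CohPow.Lt C r x (constElt C k) → ∃ j : ℕ, x = constElt C j) :=
  constants_initial_segment_general C hC r homega
end

section
/- Let C ⊆ ℕ be a cohesive set, let L = (ℕ, ≺) be a computable linear order, and let [ψ] < [φ] be elements of the cohesive power Π_C L. Then the open interval ([ψ], [φ]) in Π_C L is infinite if and only if for every k ∈ ℕ there are infinitely many n ∈ C with ψ(n)↓, φ(n)↓, and the interval {m : ψ(n) ≺ m ≺ φ(n)} in L having at least k elements (i.e., limsup over n ∈ C of the cardinality of (ψ(n), φ(n))_L is infinite). -/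
/-!
For each `i`, a uniform search finds the `i`-th element, in the order of `ℕ`, of the interval
`(ψ n, φ n)` of `L`, so the function `ξᵢ` sending `n` to that element is partial computable, and
distinct `ξᵢ` never agree. If infinitely many `n ∈ C` have more than `i` elements in their
interval, cohesiveness makes `ξᵢ` defined almost everywhere on `C`, and the `[ξᵢ]` are infinitely
many elements of `([ψ], [φ])`. Conversely, if almost all those intervals have fewer than `k`
elements, every `χ` with `[ψ] < [χ] < [φ]` agrees at almost every `n ∈ C` with one of
`ξ₀, …, ξₖ₋₁`; the agreement sets are c.e., so cohesiveness yields a single `i` with `[χ] = [ξᵢ]`.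
-/

open Nat (count)

section NthMember

variable {α : Type*} {p : α → ℕ → Bool}

theorem Computable.nat_count [Primcodable α] (hp : Computable₂ p) :
    Computable₂ fun x n => count (fun m => p x m) n := by
  have hstep : Computable₂ fun (y : α × ℕ) (mc : ℕ × ℕ) => mc.2 + bif p y.1 mc.1 then 1 else 0 :=
    Primrec.nat_add.to_comp.comp (Computable.snd.comp .snd)
      (Computable.cond (hp.comp (Computable.fst.comp .fst) (Computable.fst.comp .snd))
        (.const 1) (.const 0))
  refine (Computable.nat_rec Computable.snd (Computable.const 0) hstep).of_eq fun ⟨x, n⟩ => ?_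
  induction n with
  | zero => simp
  | succ n ih => cases h : p x n <;> simp_all [Nat.count_succ]

variable (p) in
def nthMember (x : α) (i : ℕ) : Part ℕ :=
  Nat.rfind fun m => Part.some (p x m && count (fun j => p x j) m == i)

theorem mem_nthMember {x : α} {i m : ℕ} :
    m ∈ nthMember p x i ↔ p x m ∧ count (fun j => p x j) m = i := by
  refine Nat.mem_rfind.trans ?_
  simp only [Part.mem_some_iff, eq_comm (a := true), eq_comm (a := false), Bool.and_eq_true,
    beq_iff_eq, Bool.and_eq_false_iff, beq_eq_false_iff_ne]
  refine ⟨fun h => h.1, fun h => ⟨h, fun {k} hk => ?_⟩⟩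
  by_contra! hk'
  rw [ne_eq, Bool.not_eq_false] at hk'
  exact hk.ne (Nat.count_injective hk'.1 h.1 (hk'.2.trans h.2.symm))

theorem nthMember_dom {x : α} {i : ℕ} {s : Finset ℕ} (hs : i < s.card) (hsp : ∀ m ∈ s, p x m) :
    (nthMember p x i).Dom := by
  have hcard : ∀ hf : (Set.ofPred fun m => p x m).Finite, i < hf.toFinset.card := fun hf =>
    hs.trans_le (Finset.card_le_card fun m hm => by simpa using hsp m hm)
  exact Part.dom_iff_mem.2 ⟨_, mem_nthMember.2 ⟨Nat.nth_mem _ hcard, Nat.count_nth hcard⟩⟩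

theorem Partrec.nthMember [Primcodable α] (hp : Computable₂ p) : Partrec₂ (nthMember p) := by
  refine Partrec.rfind (Computable₂.partrec₂ ?_)
  exact Primrec.and.to_comp.comp (hp.comp (Computable.fst.comp .fst) .snd)
    (Primrec.beq.to_comp.comp ((Computable.nat_count hp).comp (Computable.fst.comp .fst) .snd)
      (Computable.snd.comp .fst))

end NthMember

theorem CESet.setOf_exists_mem_mem {χ θ : ℕ →. ℕ} (hχ : Partrec χ) (hθ : Partrec θ) :
    CESet {n | ∃ a, a ∈ χ n ∧ a ∈ θ n} := by
  let agree : ℕ →. Bool := fun n => (χ n).bind fun a => (θ n).map fun b => a == b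
  have hagree : Partrec agree :=
    hχ.bind ((hθ.comp .fst).map (Primrec.beq.to_comp.comp (Computable.snd.comp .fst) .snd))
  -- a search over a constant predicate converges exactly when that predicate is `true`
  refine ⟨fun n => Nat.rfind fun _ => agree n, Partrec.rfind (hagree.comp .fst), ?_⟩
  have hmem : ∀ n, true ∈ agree n ↔ ∃ a, a ∈ χ n ∧ a ∈ θ n := fun n => by
    simp only [agree, Part.mem_bind_iff, Part.mem_map_iff, beq_iff_eq]
    exact ⟨fun ⟨a, ha, b, hb, hab⟩ => ⟨a, ha, hab ▸ hb⟩, fun ⟨a, ha, hb⟩ => ⟨a, ha, a, hb, rfl⟩⟩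
  ext n
  exact (hmem n).symm.trans
    ⟨fun h => ⟨0, h, fun {_} hm => absurd hm (Nat.not_lt_zero _)⟩, fun ⟨_, h, _⟩ => h⟩

theorem AlmostSubset.mono {C A D : Set ℕ} (h : AlmostSubset C A)
    (hAD : ∀ n ∈ C, n ∈ A → n ∈ D) : AlmostSubset C D :=
  h.subset fun n ⟨hnC, hnD⟩ => ⟨hnC, fun hnA => hnD (hAD n hnC hnA)⟩

theorem AlmostSubset.inter {C A B : Set ℕ} (hA : AlmostSubset C A) (hB : AlmostSubset C B) :
    AlmostSubset C (A ∩ B) := by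
  rw [AlmostSubset, Set.sdiff_inter]
  exact hA.union hB

theorem Cohesive.almostSubset_of_infinite_inter {C W : Set ℕ} (hC : Cohesive C) (hW : CESet W)
    (h : (W ∩ C).Infinite) : AlmostSubset C W := by
  simpa only [AlmostSubset, Set.sdiff_eq, Set.inter_comm C] using (hC.2 W hW).resolve_left h

theorem Cohesive.exists_almostSubset_of_almostSubset_biUnion {ι : Type*} {C : Set ℕ}
    (hC : Cohesive C) {s : Finset ι} {W : ι → Set ℕ} (hW : ∀ i ∈ s, CESet (W i))
    (h : AlmostSubset C (⋃ i ∈ s, W i)) : ∃ i ∈ s, AlmostSubset C (W i) := by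
  by_contra! hno
  have hfin : ∀ i ∈ s, (W i ∩ C).Finite := fun i hi =>
    Set.not_infinite.1 fun hinf => hno i hi (hC.almostSubset_of_infinite_inter (hW i hi) hinf)
  refine hC.1 ((h.union (s.finite_toSet.biUnion hfin)).subset fun n hn => ?_)
  by_cases hmem : n ∈ ⋃ i ∈ s, W i
  · obtain ⟨i, hi, hni⟩ := Set.mem_iUnion₂.1 hmem
    exact Or.inr (Set.mem_biUnion hi ⟨hni, hn⟩)
  · exact Or.inl ⟨hn, hmem⟩

theorem eqAE.symm {C : Set ℕ} {φ ψ : ℕ →. ℕ} (h : eqAE C φ ψ) : eqAE C ψ φ :=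
  h.subset fun _ hn => ⟨hn.1, fun ⟨a, h1, h2⟩ => hn.2 ⟨a, h2, h1⟩⟩

theorem eqAE.trans {C : Set ℕ} {φ ψ θ : ℕ →. ℕ} (h₁ : eqAE C φ ψ) (h₂ : eqAE C ψ θ) :
    eqAE C φ θ :=
  (AlmostSubset.inter h₁ h₂).mono fun _ _ ⟨⟨a, ha, hb⟩, ⟨_, hb', hc⟩⟩ =>
    ⟨a, ha, Part.mem_unique hb hb' ▸ hc⟩

theorem ltAE.of_eqAE {C : Set ℕ} {r : ℕ → ℕ → Prop} {φ φ' ψ ψ' : ℕ →. ℕ} (h : ltAE C r φ' ψ')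
    (hφ : eqAE C φ φ') (hψ : eqAE C ψ ψ') : ltAE C r φ ψ :=
  ((AlmostSubset.inter hφ hψ).inter h).mono
    fun _ _ ⟨⟨⟨a, ha, ha'⟩, ⟨b, hb, hb'⟩⟩, ⟨_, _, ha'', hb'', hr⟩⟩ =>
    ⟨a, b, ha, hb, Part.mem_unique ha'' ha' ▸ Part.mem_unique hb'' hb' ▸ hr⟩

namespace CohPow

variable {C : Set ℕ}

theorem mk_eq_mk_iff_s15 {φ ψ : CohCarrier C} : mk φ = mk ψ ↔ eqAE C φ.1 ψ.1 :=
  Quotient.eq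

theorem lt_mk_mk_iff_s15 {r : ℕ → ℕ → Prop} {φ ψ : CohCarrier C} :
    CohPow.Lt C r (mk φ) (mk ψ) ↔ ltAE C r φ.1 ψ.1 := by
  refine ⟨?_, fun h => ⟨φ, ψ, rfl, rfl, h⟩⟩
  rintro ⟨φ', ψ', hφ, hψ, h⟩
  exact h.of_eqAE (mk_eq_mk_iff_s15.1 hφ) (mk_eq_mk_iff_s15.1 hψ)

theorem subsingleton_setOf_eqAE (θ : ℕ →. ℕ) :
    {x : CohPow C | ∃ χ, x = mk χ ∧ eqAE C χ.1 θ}.Subsingleton := by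
  rintro _ ⟨χ, rfl, hχ⟩ _ ⟨χ', rfl, hχ'⟩
  exact mk_eq_mk_iff_s15.2 (hχ.trans hχ'.symm)

end CohPow

section Interval

variable {f : ℕ → ℕ → Bool} {ψ φ : ℕ →. ℕ}

def between (f : ℕ → ℕ → Bool) (ab : ℕ × ℕ) (m : ℕ) : Bool :=
  f ab.1 m && f m ab.2

def intervalAtLeast (r : ℕ → ℕ → Prop) (ψ φ : ℕ →. ℕ) (k : ℕ) : Set ℕ :=
  {n | ∃ a b, a ∈ ψ n ∧ b ∈ φ n ∧ ∃ s : Finset ℕ, k ≤ s.card ∧ ∀ m ∈ s, r a m ∧ r m b}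

def intervalNth (f : ℕ → ℕ → Bool) (ψ φ : ℕ →. ℕ) (i : ℕ) : ℕ →. ℕ :=
  fun n => (ψ n).bind fun a => (φ n).bind fun b => nthMember (between f) (a, b) i

theorem mem_intervalNth {i n c : ℕ} :
    c ∈ intervalNth f ψ φ i n ↔ ∃ a ∈ ψ n, ∃ b ∈ φ n,
      between f (a, b) c ∧ count (fun m => between f (a, b) m) c = i := by
  simp only [intervalNth, Part.mem_bind_iff, mem_nthMember]

theorem Partrec.intervalNth (hf : Computable₂ f) (hψ : Partrec ψ) (hφ : Partrec φ) (i : ℕ) :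
    Partrec (intervalNth f ψ φ i) := by
  have hbetween : Computable₂ (between f) :=
    Primrec.and.to_comp.comp (hf.comp (Computable.fst.comp .fst) .snd)
      (hf.comp .snd (Computable.snd.comp .fst))
  exact hψ.bind ((hφ.comp .fst).bind ((Partrec.nthMember hbetween).comp
    (((Computable.snd.comp .fst).pair .snd)) (.const i)))

theorem intervalNth_between {i n c : ℕ} (hc : c ∈ intervalNth f ψ φ i n) :
    ∃ a ∈ ψ n, ∃ b ∈ φ n, f a c ∧ f c b := by
  obtain ⟨a, ha, b, hb, hab, -⟩ := mem_intervalNth.1 hc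
  exact ⟨a, ha, b, hb, Bool.and_eq_true_iff.1 hab⟩

theorem eq_of_mem_intervalNth {i j n c : ℕ} (hi : c ∈ intervalNth f ψ φ i n)
    (hj : c ∈ intervalNth f ψ φ j n) : i = j := by
  obtain ⟨a, ha, b, hb, -, rfl⟩ := mem_intervalNth.1 hi
  obtain ⟨a', ha', b', hb', -, rfl⟩ := mem_intervalNth.1 hj
  rw [Part.mem_unique ha ha', Part.mem_unique hb hb']

theorem intervalAtLeast_subset_dom_intervalNth (i : ℕ) :
    intervalAtLeast (fun a b => f a b) ψ φ (i + 1) ⊆ (intervalNth f ψ φ i).Dom := by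
  rintro n ⟨a, b, ha, hb, s, hs, hsab⟩
  have hdom := nthMember_dom (p := between f) (x := (a, b)) hs fun m hm =>
    Bool.and_eq_true_iff.2 (hsab m hm)
  obtain ⟨c, hc⟩ := Part.dom_iff_mem.1 hdom
  exact Part.dom_iff_mem.2 ⟨c, mem_intervalNth.2 ⟨a, ha, b, hb, mem_nthMember.1 hc⟩⟩

theorem exists_mem_intervalNth_of_not_mem_intervalAtLeast {k n a b c : ℕ} (ha : a ∈ ψ n)
    (hb : b ∈ φ n) (hac : f a c) (hcb : f c b)
    (hn : n ∉ intervalAtLeast (fun a b => f a b) ψ φ k) :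
    ∃ i < k, c ∈ intervalNth f ψ φ i n := by
  refine ⟨_, ?_, mem_intervalNth.2 ⟨a, ha, b, hb, Bool.and_eq_true_iff.2 ⟨hac, hcb⟩, rfl⟩⟩
  by_contra! hk
  refine hn ⟨a, b, ha, hb, {m ∈ Finset.range c | between f (a, b) m}, ?_, fun m hm => ?_⟩
  · rwa [← Nat.count_eq_card_filter_range]
  · exact Bool.and_eq_true_iff.1 (Finset.mem_filter.1 hm).2

end Interval

namespace CohPow

variable {C : Set ℕ} {f : ℕ → ℕ → Bool} {ψ φ : CohCarrier C}

theorem exists_eqAE_intervalNth (hC : Cohesive C) (hf : Computable₂ f) {k : ℕ}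
    (hk : (C ∩ intervalAtLeast (fun a b => f a b) ψ.1 φ.1 k).Finite) {χ : CohCarrier C}
    (hψχ : ltAE C (fun a b => f a b) ψ.1 χ.1) (hχφ : ltAE C (fun a b => f a b) χ.1 φ.1) :
    ∃ i ∈ Finset.range k, eqAE C χ.1 (intervalNth f ψ.1 φ.1 i) := by
  refine hC.exists_almostSubset_of_almostSubset_biUnion
    (fun i _ => CESet.setOf_exists_mem_mem χ.2.1 (Partrec.intervalNth hf ψ.2.1 φ.2.1 i)) ?_
  have hsmall : AlmostSubset C (intervalAtLeast (fun a b => f a b) ψ.1 φ.1 k)ᶜ := by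
    rwa [AlmostSubset, Set.sdiff_compl]
  refine ((AlmostSubset.inter hψχ hχφ).inter hsmall).mono
    fun n _ ⟨⟨⟨a, c, ha, hc, hac⟩, ⟨c', b, hc', hb, hcb⟩⟩, hn⟩ => ?_
  obtain ⟨i, hik, hi⟩ := exists_mem_intervalNth_of_not_mem_intervalAtLeast ha hb hac
    (Part.mem_unique hc' hc ▸ hcb) hn
  exact Set.mem_iUnion₂.2 ⟨i, Finset.mem_range.2 hik, c, hc, hi⟩

theorem finite_interval_of_finite_intervalAtLeast (hC : Cohesive C) (hf : Computable₂ f) {k : ℕ}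
    (hk : (C ∩ intervalAtLeast (fun a b => f a b) ψ.1 φ.1 k).Finite) :
    {x | Lt C (fun a b => f a b) (mk ψ) x ∧ Lt C (fun a b => f a b) x (mk φ)}.Finite := by
  refine ((Finset.range k).finite_toSet.biUnion fun i _ =>
    (subsingleton_setOf_eqAE (intervalNth f ψ.1 φ.1 i)).finite).subset ?_
  rintro x ⟨hψx, hxφ⟩
  obtain ⟨χ, rfl⟩ := Quotient.exists_rep x
  obtain ⟨i, hi, hχ⟩ := exists_eqAE_intervalNth hC hf hk (lt_mk_mk_iff_s15.1 hψx)
    (lt_mk_mk_iff_s15.1 hxφ)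
  exact Set.mem_biUnion hi ⟨χ, rfl, hχ⟩

theorem almostSubset_dom_intervalNth (hC : Cohesive C) (hf : Computable₂ f) {i : ℕ}
    (h : (C ∩ intervalAtLeast (fun a b => f a b) ψ.1 φ.1 (i + 1)).Infinite) :
    AlmostSubset C (intervalNth f ψ.1 φ.1 i).Dom :=
  hC.almostSubset_of_infinite_inter ⟨_, Partrec.intervalNth hf ψ.2.1 φ.2.1 i, rfl⟩
    (h.mono fun _ hn => ⟨intervalAtLeast_subset_dom_intervalNth i hn.2, hn.1⟩)

theorem infinite_interval_of_infinite_intervalAtLeast (hC : Cohesive C) (hf : Computable₂ f)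
    (h : ∀ k, (C ∩ intervalAtLeast (fun a b => f a b) ψ.1 φ.1 k).Infinite) :
    {x | Lt C (fun a b => f a b) (mk ψ) x ∧ Lt C (fun a b => f a b) x (mk φ)}.Infinite := by
  let ξ : ℕ → CohCarrier C := fun i => ⟨intervalNth f ψ.1 φ.1 i,
    Partrec.intervalNth hf ψ.2.1 φ.2.1 i, almostSubset_dom_intervalNth hC hf (h (i + 1))⟩
  refine Set.infinite_of_injective_forall_mem (f := fun i => mk (ξ i))
    (fun i j hij => ?_) fun i => ⟨lt_mk_mk_iff_s15.2 ?_, lt_mk_mk_iff_s15.2 ?_⟩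
  · obtain ⟨n, hnC, hn⟩ := (hC.1.sdiff (mk_eq_mk_iff_s15.1 hij)).nonempty
    obtain ⟨c, hi, hj⟩ := not_not.1 fun h' => hn ⟨hnC, h'⟩
    exact eq_of_mem_intervalNth hi hj
  · refine AlmostSubset.mono (ξ i).2.2 fun n _ hdom => ?_
    obtain ⟨c, hc⟩ := Part.dom_iff_mem.1 hdom
    obtain ⟨a, ha, -, -, hac, -⟩ := intervalNth_between hc
    exact ⟨a, c, ha, hc, hac⟩
  · refine AlmostSubset.mono (ξ i).2.2 fun n _ hdom => ?_
    obtain ⟨c, hc⟩ := Part.dom_iff_mem.1 hdom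
    obtain ⟨-, -, b, hb, -, hcb⟩ := intervalNth_between hc
    exact ⟨c, b, hc, hb, hcb⟩

end CohPow

theorem interval_infinite_iff_limsup_general (C : Set ℕ) (hC : Cohesive C)
    (r : ℕ → ℕ → Prop) (hcomp : ComputableRel r)
    (ψ φ : CohCarrier C) :
    {x : CohPow C | CohPow.Lt C r (CohPow.mk ψ) x ∧ CohPow.Lt C r x (CohPow.mk φ)}.Infinite ↔
      ∀ k : ℕ, {n | n ∈ C ∧ ∃ a b, a ∈ ψ.1 n ∧ b ∈ φ.1 n ∧
        ∃ s : Finset ℕ, k ≤ s.card ∧ ∀ m ∈ s, r a m ∧ r m b}.Infinite := by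
  obtain ⟨f, hf, hfr⟩ := hcomp
  obtain rfl : r = fun a b => f a b = true := funext₂ fun a b => propext (hfr a b)
  exact ⟨fun hI k hk => hI (CohPow.finite_interval_of_finite_intervalAtLeast hC hf hk),
    CohPow.infinite_interval_of_infinite_intervalAtLeast hC hf⟩

/-- The open interval `([ψ], [φ])` in a cohesive power is infinite iff the limsup over
`n ∈ C` of the cardinality of the interval `(ψ(n), φ(n))` is infinite. -/
theorem interval_infinite_iff_limsup (C : Set ℕ) (hC : Cohesive C)
    (r : ℕ → ℕ → Prop) (hcomp : ComputableRel r) (hsto : IsStrictTotalOrder ℕ r)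
    (ψ φ : CohCarrier C)
    (hlt : CohPow.Lt C r (CohPow.mk ψ) (CohPow.mk φ)) :
    {x : CohPow C | CohPow.Lt C r (CohPow.mk ψ) x ∧ CohPow.Lt C r x (CohPow.mk φ)}.Infinite ↔
      ∀ k : ℕ, {n | n ∈ C ∧ ∃ a b, a ∈ ψ.1 n ∧ b ∈ φ.1 n ∧
        ∃ s : Finset ℕ, k ≤ s.card ∧ ∀ m ∈ s, r a m ∧ r m b}.Infinite :=
  interval_infinite_iff_limsup_general C hC r hcomp ψ φ
end

section
/- There exists a computable linear order L = (ℕ, ≺) of order type ω (order-isomorphic to (ℕ, <)) whose successor function (the total function mapping each element to its ≺-immediate successor) is not computable. Moreover, for every noncomputable computably enumerable set A ⊆ ℕ, such an L can be chosen so that membership in A is decidable from the successor function of L (specifically, with the elements of L arranged so that a ∈ A iff the successor of a designated element coding a is not the expected one). -/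
/-! Order `ℕ` by an injective key `κ : ℕ → ℕ`; such an order has type ω, and it is computable
when `κ` is. Even numbers are their own keys, so `4a` and `4a + 2` are adjacent except for the
key `4a + 1`. That key is given to the odd number `2⟨a, k⟩ + 1` when the computation witnessing
`a ∈ A` halts exactly at stage `k + 1`; every other odd number `2s + 1` is parked at `4s + 3`.
Hence `4a + 2` is the successor of `4a` iff `a ∉ A`, and a computable successor function would
decide `A`. -/

open Function Nat.Partrec Nat.Partrec.Code

theorem ImmSucc.unique {α : Type*} {r : α → α → Prop} [Std.Trichotomous r] {x y y' : α}
    (h : ImmSucc r x y) (h' : ImmSucc r x y') : y = y' :=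
  Std.Trichotomous.trichotomous y y' (fun hyy' => h'.2 y ⟨h.1, hyy'⟩)
    (fun hy'y => h.2 y' ⟨h'.1, hy'y⟩)

theorem not_exists_computable_succ {r : ℕ → ℕ → Prop} {A : Set ℕ} (hA : ¬ ComputableSet A)
    {c e : ℕ → ℕ} (hc : Computable c) (he : Computable e)
    (hr : ∀ S : ℕ → ℕ, (∀ n, ImmSucc r n (S n)) → ∀ a, a ∈ A ↔ S (c a) ≠ e a) :
    ¬ ∃ S : ℕ → ℕ, Computable S ∧ ∀ n, ImmSucc r n (S n) := by
  rintro ⟨S, hS_computable, hS⟩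
  exact hA ⟨fun a => !decide (S (c a) = e a),
    Primrec.not.to_comp.comp (Primrec.eq.decide.to_comp.comp (hS_computable.comp hc) he),
    fun a => by simp [hr S hS]⟩

theorem exists_ceSet_not_computableSet : ∃ A : Set ℕ, CESet A ∧ ¬ ComputableSet A := by
  refine ⟨{m | (eval (Denumerable.ofNat Code m) 0).Dom},
    ⟨_, eval_part.comp (Computable.ofNat _) (Computable.const 0), rfl⟩, ?_⟩
  rintro ⟨g, hg, hgA⟩
  refine ComputablePred.halting_problem 0 (ComputablePred.computable_iff.mpr
    ⟨fun c => g (Encodable.encode c), hg.comp Computable.encode, funext fun c => ?_⟩)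
  simpa using propext (hgA (Encodable.encode c))

section PreimageLt

variable {κ : ℕ → ℕ}

theorem isStrictTotalOrder_preimage_lt (hκ : Injective κ) :
    IsStrictTotalOrder ℕ (κ ⁻¹'o (· < ·)) :=
  (RelEmbedding.preimage ⟨κ, hκ⟩ (· < ·)).isStrictTotalOrder

theorem orderTypeOmega_preimage_lt (hκ : Injective κ) :
    OrderTypeOmega (κ ⁻¹'o (· < ·)) := by
  have := (Set.infinite_range_of_injective hκ).to_subtype
  let o := Nat.Subtype.orderIsoOfNat (Set.range κ)
  refine ⟨⟨(Equiv.ofInjective κ hκ).trans o.symm.toEquiv, fun {x y} => ?_⟩⟩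
  change o.symm _ < o.symm _ ↔ κ x < κ y
  rw [o.symm.lt_iff_lt]
  exact Subtype.mk_lt_mk

theorem computableRel_preimage_lt (hκ : Computable κ) :
    ComputableRel (κ ⁻¹'o (· < ·)) :=
  ⟨fun m n => decide (κ m < κ n),
    Primrec.nat_lt.decide.to_comp.comp (hκ.comp Computable.fst) (hκ.comp Computable.snd),
    fun m n => by simp [Order.Preimage]⟩

end PreimageLt

namespace HaltingOrder

variable (c : Code)

def haltsAt (n k : ℕ) : Bool :=
  (evaln (k + 1) c n).isSome && !(evaln k c n).isSome

variable {c}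

theorem isSome_evaln_mono {k₁ k₂ n : ℕ} (hk : k₁ ≤ k₂) (h : (evaln k₁ c n).isSome) :
    (evaln k₂ c n).isSome := by
  obtain ⟨x, hx⟩ := Option.isSome_iff_exists.mp h
  exact Option.isSome_iff_exists.mpr ⟨x, evaln_mono hk hx⟩

theorem haltsAt_unique {n k₁ k₂ : ℕ} (h₁ : haltsAt c n k₁) (h₂ : haltsAt c n k₂) :
    k₁ = k₂ := by
  simp only [haltsAt, Bool.and_eq_true, Bool.not_eq_true'] at h₁ h₂
  by_contra hne
  rcases Nat.lt_or_gt_of_ne hne with hlt | hlt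
  · simpa [h₂.2] using isSome_evaln_mono hlt h₁.1
  · simpa [h₁.2] using isSome_evaln_mono hlt h₂.1

theorem eval_dom_iff_exists_haltsAt {n : ℕ} : (eval c n).Dom ↔ ∃ k, haltsAt c n k := by
  constructor
  · intro h
    obtain ⟨x, hx⟩ := Part.dom_iff_mem.mp h
    have hstage : ∃ m, (evaln m c n).isSome := by
      obtain ⟨m, hm⟩ := evaln_complete.mp hx
      exact ⟨m, Option.isSome_iff_exists.mpr ⟨x, hm⟩⟩
    obtain ⟨k, hk⟩ : ∃ k, Nat.find hstage = k + 1 :=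
      Nat.exists_eq_succ_of_ne_zero fun h0 => by simpa [h0, evaln] using Nat.find_spec hstage
    refine ⟨k, ?_⟩
    simp only [haltsAt, Bool.and_eq_true, Bool.not_eq_true']
    exact ⟨hk ▸ Nat.find_spec hstage, by simpa using Nat.find_min hstage (m := k) (by omega)⟩
  · rintro ⟨k, hk⟩
    simp only [haltsAt, Bool.and_eq_true] at hk
    obtain ⟨x, hx⟩ := Option.isSome_iff_exists.mp hk.1
    exact Part.dom_iff_mem.mpr ⟨x, evaln_sound hx⟩

variable (c)

theorem primrec₂_haltsAt : Primrec₂ (haltsAt c) := by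
  have evaln_at (f : ℕ → ℕ) (hf : Primrec f) : Primrec₂ fun n k => evaln (f k) c n :=
    primrec_evaln.comp ((hf.comp Primrec.snd).pair (Primrec.const c) |>.pair Primrec.fst)
  exact Primrec.and.comp (Primrec.option_isSome.comp (evaln_at _ Primrec.succ))
    (Primrec.not.comp (Primrec.option_isSome.comp (evaln_at _ Primrec.id)))

def key (x : ℕ) : ℕ :=
  if x % 2 = 0 then x
  else if haltsAt c (x / 2).unpair.1 (x / 2).unpair.2 then 4 * (x / 2).unpair.1 + 1
  else 4 * (x / 2) + 3

theorem primrec_key : Primrec (key c) := by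
  have half : Primrec fun x : ℕ => x / 2 := Primrec.nat_div.comp Primrec.id (Primrec.const 2)
  have halts : PrimrecPred fun x : ℕ => haltsAt c (x / 2).unpair.1 (x / 2).unpair.2 :=
    Primrec.eq.comp ((primrec₂_haltsAt c).comp (Primrec.fst.comp (Primrec.unpair.comp half))
      (Primrec.snd.comp (Primrec.unpair.comp half))) (Primrec.const true)
  exact Primrec.ite (Primrec.eq.comp (Primrec.nat_mod.comp Primrec.id (Primrec.const 2))
      (Primrec.const 0)) Primrec.id
    (Primrec.ite halts
      (Primrec.nat_add.comp (Primrec.nat_mul.comp (Primrec.const 4)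
        (Primrec.fst.comp (Primrec.unpair.comp half))) (Primrec.const 1))
      (Primrec.nat_add.comp (Primrec.nat_mul.comp (Primrec.const 4) half) (Primrec.const 3)))

variable {c}

theorem key_two_mul (m : ℕ) : key c (2 * m) = 2 * m := by
  simp [key]

theorem key_of_mod_two_eq_zero {m : ℕ} (hm : m % 2 = 0) : key c m = m := by
  simp [key, hm]

theorem key_two_mul_add_one (s : ℕ) :
    key c (2 * s + 1) =
      if haltsAt c s.unpair.1 s.unpair.2 then 4 * s.unpair.1 + 1 else 4 * s + 3 := by
  have : (2 * s + 1) / 2 = s := by omega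
  simp [key, this]

theorem key_injective : Injective (key c) := by
  intro x y h
  obtain ⟨m, rfl | rfl⟩ := Nat.even_or_odd' x <;> obtain ⟨m', rfl | rfl⟩ := Nat.even_or_odd' y <;>
    simp only [key_two_mul, key_two_mul_add_one] at h
  · omega
  · split_ifs at h <;> omega
  · split_ifs at h <;> omega
  · split_ifs at h with h₁ h₂ h₂ <;> try omega
    have hfst : m.unpair.1 = m'.unpair.1 := by omega
    have hsnd := haltsAt_unique h₁ (hfst ▸ h₂)
    rw [← Nat.pair_unpair m, ← Nat.pair_unpair m', hfst, hsnd]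

theorem exists_key_eq_iff {a : ℕ} : (∃ z, key c z = 4 * a + 1) ↔ (eval c a).Dom := by
  rw [eval_dom_iff_exists_haltsAt]
  constructor
  · rintro ⟨z, hz⟩
    obtain ⟨s, rfl | rfl⟩ := Nat.even_or_odd' z
    · rw [key_two_mul] at hz; omega
    · rw [key_two_mul_add_one] at hz
      split_ifs at hz with hs
      · exact ⟨s.unpair.2, by rwa [show a = s.unpair.1 by omega]⟩
      · omega
  · rintro ⟨k, hk⟩
    exact ⟨2 * Nat.pair a k + 1, by simp [key_two_mul_add_one, hk]⟩

theorem mem_dom_iff_succ_ne {S : ℕ → ℕ} (hS : ∀ n, ImmSucc (key c ⁻¹'o (· < ·)) n (S n))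
    (a : ℕ) : (eval c a).Dom ↔ S (4 * a) ≠ 4 * a + 2 := by
  have := isStrictTotalOrder_preimage_lt (key_injective (c := c))
  have hkey : key c (4 * a) = 4 * a := key_of_mod_two_eq_zero (by omega)
  have hkey₂ : key c (4 * a + 2) = 4 * a + 2 := key_of_mod_two_eq_zero (by omega)
  constructor
  · rintro hdom heq
    obtain ⟨z, hz⟩ := exists_key_eq_iff.mpr hdom
    have hsucc : ImmSucc (key c ⁻¹'o (· < ·)) (4 * a) z := by
      refine ⟨?_, fun w ⟨h₁, h₂⟩ => ?_⟩ <;> simp only [Order.Preimage, hkey, hz] at * <;> omega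
    have := congrArg (key c) ((hS _).unique hsucc)
    rw [heq, hkey₂, hz] at this
    omega
  · intro hne
    by_contra hndom
    refine hne ((hS _).unique ⟨?_, fun w ⟨h₁, h₂⟩ => hndom (exists_key_eq_iff.mp ⟨w, ?_⟩)⟩) <;>
      simp only [Order.Preimage, hkey, hkey₂] at * <;> omega

end HaltingOrder

open HaltingOrder in
theorem CESet.exists_omega_order_mem_iff_succ_ne {A : Set ℕ} (hA : CESet A) :
    ∃ r : ℕ → ℕ → Prop, ComputableRel r ∧ IsStrictTotalOrder ℕ r ∧ OrderTypeOmega r ∧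
      ∀ S : ℕ → ℕ, (∀ n, ImmSucc r n (S n)) → ∀ a, a ∈ A ↔ S (4 * a) ≠ 4 * a + 2 := by
  obtain ⟨f, hf, rfl⟩ := hA
  obtain ⟨c, rfl⟩ := Code.exists_code.mp (Partrec.nat_iff.mp hf)
  exact ⟨key c ⁻¹'o (· < ·), computableRel_preimage_lt (primrec_key c).to_comp,
    isStrictTotalOrder_preimage_lt key_injective, orderTypeOmega_preimage_lt key_injective,
    fun S hS => mem_dom_iff_succ_ne hS⟩

/-- There is a computable linear order of type ω whose successor function is not
computable; moreover, for every noncomputable c.e. set `A`, such an order can be chosen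
so that membership in `A` is decided by the successor function (via computable
functions `c` and `e`: `a ∈ A` iff the successor of the element `c a` coding `a` is not
the expected value `e a`). -/
theorem exists_omega_order_noncomputable_succ :
    (∃ r : ℕ → ℕ → Prop, ComputableRel r ∧ IsStrictTotalOrder ℕ r ∧ OrderTypeOmega r ∧
      ¬ ∃ S : ℕ → ℕ, Computable S ∧ ∀ n, ImmSucc r n (S n)) ∧
    ∀ A : Set ℕ, CESet A → ¬ ComputableSet A →
      ∃ r : ℕ → ℕ → Prop, ComputableRel r ∧ IsStrictTotalOrder ℕ r ∧ OrderTypeOmega r ∧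
        (¬ ∃ S : ℕ → ℕ, Computable S ∧ ∀ n, ImmSucc r n (S n)) ∧
        ∃ c e : ℕ → ℕ, Computable c ∧ Computable e ∧
          ∀ S : ℕ → ℕ, (∀ n, ImmSucc r n (S n)) →
            ∀ a : ℕ, a ∈ A ↔ S (c a) ≠ e a := by
  have hc : Primrec fun a : ℕ => 4 * a := Primrec.nat_mul.comp (Primrec.const 4) Primrec.id
  have he : Primrec fun a : ℕ => 4 * a + 2 := Primrec.nat_add.comp hc (Primrec.const 2)
  constructor
  · obtain ⟨K, hK, hK_not_computable⟩ := exists_ceSet_not_computableSet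
    obtain ⟨r, hr_computable, hr_order, hr_omega, hr_succ⟩ := hK.exists_omega_order_mem_iff_succ_ne
    exact ⟨r, hr_computable, hr_order, hr_omega,
      not_exists_computable_succ hK_not_computable hc.to_comp he.to_comp hr_succ⟩
  · intro A hA hA_not_computable
    obtain ⟨r, hr_computable, hr_order, hr_omega, hr_succ⟩ := hA.exists_omega_order_mem_iff_succ_ne
    exact ⟨r, hr_computable, hr_order, hr_omega,
      not_exists_computable_succ hA_not_computable hc.to_comp he.to_comp hr_succ,
      _, _, hc.to_comp, he.to_comp, hr_succ⟩
end

section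
/- Let C ⊆ ℕ be a cohesive set, let φ : ℕ →. ℕ be a partial computable function with C ⊆* dom(φ), and let W ⊆ ℕ be a computably enumerable set. Then either for all but finitely many n ∈ C, φ(n)↓ and φ(n) ∈ W, or for all but finitely many n ∈ C, φ(n)↓ and φ(n) ∉ W. -/
/-! `φ⁻¹(W)` is c.e., so cohesiveness puts almost all of `C` either inside it or outside
it. Outside means `φ(n)↓ ∉ W` or `φ(n)↑`, and `C ⊆* dom(φ)` excludes the second alternative
for almost all `n ∈ C`. -/

theorem CESet.pfunPreimage {W : Set ℕ} (hW : CESet W) {φ : ℕ →. ℕ} (hφ : Partrec φ) :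
    CESet (φ.preimage W) := by
  obtain ⟨g, hg, rfl⟩ := hW
  exact ⟨g.comp φ, hφ.bind (hg.comp Computable.snd).to₂, (PFun.dom_comp g φ).symm⟩

theorem PFun.diff_preimage_compl_subset {α β : Type*} (φ : α →. β) (s : Set β) (C : Set α) :
    C \ φ.preimage sᶜ ⊆ (φ.preimage s ∩ C) ∪ (C \ φ.Dom) := by
  rintro n ⟨hnC, hn⟩
  rw [← PFun.preimage_univ, ← Set.union_compl_self s, PFun.preimage_union]
  simp only [Set.mem_union, Set.mem_inter_iff, Set.mem_sdiff]
  tauto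

theorem Cohesive.finite_diff_pfunPreimage_or_compl {C : Set ℕ} (hC : Cohesive C)
    {φ : ℕ →. ℕ} (hφ : Partrec φ) (hdom : (C \ φ.Dom).Finite) {W : Set ℕ} (hW : CESet W) :
    (C \ φ.preimage W).Finite ∨ (C \ φ.preimage Wᶜ).Finite := by
  rcases hC.2 _ (hW.pfunPreimage hφ) with hin | hout
  · exact Or.inr <| (hin.union hdom).subset (φ.diff_preimage_compl_subset W C)
  · exact Or.inl <| by rwa [Set.sdiff_eq, Set.inter_comm]

/-- If `C` is cohesive, `φ` is partial computable with `C ⊆* dom(φ)`, and `W` is c.e.,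
then either `φ(n)↓ ∈ W` for almost all `n ∈ C`, or `φ(n)↓ ∉ W` for almost all
`n ∈ C`. -/
theorem cohesive_partial_computable_dichotomy (C : Set ℕ) (hC : Cohesive C)
    (φ : ℕ →. ℕ) (hφ : Partrec φ) (hdom : (C \ φ.Dom).Finite)
    (W : Set ℕ) (hW : CESet W) :
    {n | n ∈ C ∧ ¬ ∃ a, a ∈ φ n ∧ a ∈ W}.Finite ∨
    {n | n ∈ C ∧ ¬ ∃ a, a ∈ φ n ∧ a ∉ W}.Finite := by
  convert hC.finite_diff_pfunPreimage_or_compl hφ hdom hW using 3 <;> ext n <;>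
    simp only [Set.mem_ofPred_eq, Set.mem_sdiff, PFun.mem_preimage, Set.mem_compl_iff, and_comm]
end
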